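/- arXiv:1702.03576 — 10 statements merged into one kernel-verified Lean document; each statement's English description precedes it below -/
import Mathlib

section
/- If u₀ is a measurable function with 0 ≤ u₀(x) ≤ 1 μ-almost everywhere, and there exist p₀ > 0 and p = (p₁,…,pₙ) ≥ 0 such that u₀(x) = θ(p₀ - p·x) (the indicator of the half-space {x : p·x ≤ p₀}) and lᵢ = ∫ xᵢ θ(p₀ - p·x) μ(dx) for all i, then u₀ maximizes ∫ u(x) μ(dx) over all measurable u with 0 ≤ u ≤ 1 μ-a.e. and ∫ xᵢ u(x) μ(dx) ≤ lᵢ for all i. -/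
/-!
The Lagrange multiplier `p` turns the problem into an unconstrained one: with `w x = p·x` and
`c = p₀`, the half-space indicator `u₀` is `1` exactly where `c - w ≥ 0`, so pointwise
`(c - w)(u - u₀) ≤ 0` for every `0 ≤ u ≤ 1`. Integrating gives
`c ∫ u + ∫ w u₀ ≤ c ∫ u₀ + ∫ w u`; the resource constraints give `∫ w u ≤ ∫ w u₀`, and
`∫ w u₀ ≤ c ∫ u₀` is finite (when `∫ u₀` is), so it can be cancelled.
-/

open MeasureTheory ENNReal

-- `(c - w)(u - u₀) ≤ 0` on the set `{w ≤ c}`, written without subtraction.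
theorem ENNReal.mul_add_le_add_mul_of_le {a c d : ℝ≥0∞} (hd : d ≤ 1) (h : c ≤ a) :
    a * d + c ≤ a + c * d :=
  calc a * d + c = a * d + c * (1 - d) + c * d := by
        rw [add_assoc, ← mul_add, tsub_add_cancel_of_le hd, mul_one]
    _ ≤ a * d + a * (1 - d) + c * d := by gcongr
    _ = a + c * d := by rw [← mul_add, add_tsub_cancel_of_le hd, mul_one]

theorem lintegral_le_lintegral_of_lintegral_mul_le {α : Type*} [MeasurableSpace α]
    {μ : Measure α} {w u u₀ : α → ℝ≥0∞} {c : ℝ≥0∞} (hc₀ : c ≠ 0) (hc : c ≠ ∞)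
    (hw : AEMeasurable w μ) (hu₀ : ∀ᵐ x ∂μ, u₀ x = if w x ≤ c then 1 else 0)
    (hu : ∀ᵐ x ∂μ, u x ≤ 1) (hcost : ∫⁻ x, w x * u x ∂μ ≤ ∫⁻ x, w x * u₀ x ∂μ) :
    ∫⁻ x, u x ∂μ ≤ ∫⁻ x, u₀ x ∂μ := by
  rcases eq_or_ne (∫⁻ x, u₀ x ∂μ) ∞ with hinf | hfin
  · simp [hinf]
  have hthreshold : Measurable fun y : ℝ≥0∞ => if y ≤ c then (1 : ℝ≥0∞) else 0 :=
    Measurable.ite measurableSet_Iic measurable_const measurable_const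
  have hu₀_meas : AEMeasurable u₀ μ :=
    (hthreshold.comp_aemeasurable hw).congr (hu₀.mono fun _ hx => hx.symm)
  have hexchange : ∀ᵐ x ∂μ, c * u x + w x * u₀ x ≤ c * u₀ x + w x * u x := by
    filter_upwards [hu₀, hu] with x hx₀ hx
    split_ifs at hx₀ with hwc
    · simpa [hx₀] using ENNReal.mul_add_le_add_mul_of_le hx hwc
    · simpa [hx₀] using mul_le_mul_left (not_le.1 hwc).le (u x)
  have hcost_fin : ∫⁻ x, w x * u₀ x ∂μ ≠ ∞ := by
    refine ne_top_of_le_ne_top (mul_ne_top hc hfin) ?_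
    rw [← lintegral_const_mul' _ _ hc]
    refine lintegral_mono_ae (hu₀.mono fun x hx => ?_)
    split_ifs at hx with hwc <;> simp [hx, hwc]
  have hlagrange : c * ∫⁻ x, u x ∂μ + ∫⁻ x, w x * u₀ x ∂μ ≤
      c * ∫⁻ x, u₀ x ∂μ + ∫⁻ x, w x * u₀ x ∂μ :=
    calc c * ∫⁻ x, u x ∂μ + ∫⁻ x, w x * u₀ x ∂μ
        ≤ ∫⁻ x, c * u x + w x * u₀ x ∂μ := by
          rw [← lintegral_const_mul' _ _ hc]; exact le_lintegral_add _ _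
      _ ≤ ∫⁻ x, c * u₀ x + w x * u x ∂μ := lintegral_mono_ae hexchange
      _ = c * ∫⁻ x, u₀ x ∂μ + ∫⁻ x, w x * u x ∂μ := by
          rw [lintegral_add_left' (hu₀_meas.const_mul c), lintegral_const_mul' _ _ hc]
      _ ≤ c * ∫⁻ x, u₀ x ∂μ + ∫⁻ x, w x * u₀ x ∂μ := by gcongr
  exact (ENNReal.mul_le_mul_iff_right hc₀ hc).1
    ((ENNReal.add_le_add_iff_right hcost_fin).1 hlagrange)

theorem lintegral_ofReal_sum_mul_coord_mul {ι : Type*} [Fintype ι] {μ : Measure (ι → ℝ)}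
    (hsupp : ∀ᵐ x ∂μ, ∀ i, 0 ≤ x i) {p : ι → ℝ} (hp : ∀ i, 0 ≤ p i) {v : (ι → ℝ) → ℝ≥0∞}
    (hv : AEMeasurable v μ) :
    ∫⁻ x, ENNReal.ofReal (∑ i, p i * x i) * v x ∂μ =
      ∑ i, ENNReal.ofReal (p i) * ∫⁻ x, ENNReal.ofReal (x i) * v x ∂μ := by
  have hcoord : ∀ i, AEMeasurable (fun x : ι → ℝ => ENNReal.ofReal (x i) * v x) μ := fun i =>
    (measurable_pi_apply i).ennreal_ofReal.aemeasurable.mul hv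
  calc ∫⁻ x, ENNReal.ofReal (∑ i, p i * x i) * v x ∂μ
      = ∫⁻ x, ∑ i, ENNReal.ofReal (p i) * (ENNReal.ofReal (x i) * v x) ∂μ := by
        refine lintegral_congr_ae (hsupp.mono fun x hx => ?_)
        simp only [ENNReal.ofReal_sum_of_nonneg fun i _ => mul_nonneg (hp i) (hx i),
          Finset.sum_mul, ENNReal.ofReal_mul (hp _), mul_assoc]
    _ = ∑ i, ENNReal.ofReal (p i) * ∫⁻ x, ENNReal.ofReal (x i) * v x ∂μ := by
        rw [lintegral_finsetSum' _ fun i _ => (hcoord i).const_mul _]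
        exact Finset.sum_congr rfl fun i _ => lintegral_const_mul'' _ (hcoord i)

/-- Sufficiency part of the generalized Neyman-Pearson lemma: if `u₀` is the indicator
of the half-space `{x : p·x ≤ p₀}` with `p₀ > 0`, `p ≥ 0`, and the resource bounds `l i`
are exactly the resources consumed by `u₀`, then `u₀` maximizes total output among all
measurable `0 ≤ u ≤ 1` satisfying the resource constraints. -/
theorem neyman_pearson_sufficiency
    (n : ℕ) (μ : Measure (Fin n → ℝ))
    (hsupp : ∀ᵐ x ∂μ, ∀ i, 0 ≤ x i)
    (p₀ : ℝ) (hp₀ : 0 < p₀) (p : Fin n → ℝ) (hp : ∀ i, 0 ≤ p i)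
    (u₀ : (Fin n → ℝ) → ℝ≥0∞)
    (hu₀ : u₀ = fun x => if (∑ i, p i * x i) ≤ p₀ then 1 else 0)
    (l : Fin n → ℝ≥0∞)
    (hl : ∀ i, l i = ∫⁻ x, ENNReal.ofReal (x i) * u₀ x ∂μ)
    (u : (Fin n → ℝ) → ℝ≥0∞) (hu_meas : Measurable u)
    (hu_le : ∀ᵐ x ∂μ, u x ≤ 1)
    (hu_res : ∀ i, ∫⁻ x, ENNReal.ofReal (x i) * u x ∂μ ≤ l i) :
    ∫⁻ x, u x ∂μ ≤ ∫⁻ x, u₀ x ∂μ := by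
  set w : (Fin n → ℝ) → ℝ≥0∞ := fun x => ENNReal.ofReal (∑ i, p i * x i)
  have hw : Measurable w := by fun_prop
  have hu₀w : ∀ x, u₀ x = if w x ≤ ENNReal.ofReal p₀ then 1 else 0 := fun x => by
    simp [hu₀, w, ENNReal.ofReal_le_ofReal_iff hp₀.le]
  have hu₀_meas : Measurable u₀ := by
    rw [funext hu₀w]
    exact Measurable.ite (measurableSet_le hw measurable_const) measurable_const measurable_const
  have hcost : ∫⁻ x, w x * u x ∂μ ≤ ∫⁻ x, w x * u₀ x ∂μ := by
    rw [lintegral_ofReal_sum_mul_coord_mul hsupp hp hu_meas.aemeasurable,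
      lintegral_ofReal_sum_mul_coord_mul hsupp hp hu₀_meas.aemeasurable]
    exact Finset.sum_le_sum fun i _ => mul_le_mul_right ((hu_res i).trans (hl i).le) _
  exact lintegral_le_lintegral_of_lintegral_mul_le (ENNReal.ofReal_pos.2 hp₀).ne'
    ofReal_ne_top hw.aemeasurable (ae_of_all _ hu₀w) hu_le hcost
end

section
/- For a locally finite non-negative Borel measure μ on ℝⁿ₊ and l ≥ 0 with ∫(1+|x|)μ(dx) < ∞, the resource distribution problem (maximize ∫ u dμ over measurable 0 ≤ u ≤ 1 with ∫ xᵢ u(x) μ(dx) ≤ lᵢ for all i) has a solution. -/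
/-!
Weighting `μ` by `w x = 1 + ‖x‖` gives a finite measure `ν` for which the densities `1 / w` and
`xᵢ / w` are bounded by `1`, so the objective and the constraints become inner products in
`L²(ν)` against fixed vectors. The feasible set is then a nonempty, bounded, closed, convex subset
of a Hilbert space, hence weakly compact, and the continuous linear objective attains its maximum
on it.
-/

open MeasureTheory ENNReal Metric InnerProductSpace
open scoped NNReal

section WeakCompactness

variable {H : Type*} [NormedAddCommGroup H] [InnerProductSpace ℝ H] [CompleteSpace H]

-- The Riesz isomorphism carries the weak-* topology of the dual to the weak topology of `H`,
-- so Banach–Alaoglu applies.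
theorem InnerProductSpace.isCompact_weakSpace_of_isBounded_of_isClosed
    {S : Set (WeakSpace ℝ H)} (hb : Bornology.IsBounded ((toWeakSpace ℝ H) ⁻¹' S))
    (hc : IsClosed S) : IsCompact S := by
  obtain ⟨r, hr⟩ := hb.subset_closedBall 0
  let riesz : WeakDual ℝ H → WeakSpace ℝ H :=
    fun φ => toWeakSpace ℝ H ((toDual ℝ H).symm (WeakDual.toStrongDual φ))
  have hriesz : Continuous riesz := by
    refine WeakBilin.continuous_of_continuous_eval _ fun f => ?_
    convert WeakDual.eval_continuous ((toDual ℝ H).symm f) using 2 with φ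
    show f ((toDual ℝ H).symm (WeakDual.toStrongDual φ)) = φ ((toDual ℝ H).symm f)
    rw [← (toDual ℝ H).apply_symm_apply f, toDual_apply_apply, real_inner_comm,
      ← toDual_apply_apply, LinearIsometryEquiv.apply_symm_apply,
      LinearIsometryEquiv.symm_apply_apply]
    rfl
  refine ((WeakDual.isCompact_closedBall 0 r).image hriesz).of_isClosed_subset hc fun x hx => ?_
  refine ⟨StrongDual.toWeakDual (toDual ℝ H ((toWeakSpace ℝ H).symm x)), ?_, by simp [riesz]⟩
  simpa using hr (show (toWeakSpace ℝ H).symm x ∈ _ by simpa using hx)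

theorem Convex.exists_isMaxOn_of_isClosed_of_isBounded {K : Set H} (hconv : Convex ℝ K)
    (hc : IsClosed K) (hb : Bornology.IsBounded K) (hne : K.Nonempty) (φ : StrongDual ℝ H) :
    ∃ x ∈ K, IsMaxOn φ K x := by
  have hclosed : IsClosed (toWeakSpace ℝ H '' K) := by
    rw [← closure_eq_iff_isClosed, ← hconv.toWeakSpace_closure ℝ, hc.closure_eq]
  have hcompact : IsCompact (toWeakSpace ℝ H '' K) :=
    isCompact_weakSpace_of_isBounded_of_isClosed
      (by rwa [Set.preimage_image_eq _ (toWeakSpace ℝ H).injective]) hclosed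
  obtain ⟨_, ⟨x, hx, rfl⟩, hmax⟩ := hcompact.exists_isMaxOn (hne.image _)
    (WeakBilin.eval_continuous (topDualPairing ℝ H).flip φ).continuousOn
  exact ⟨x, hx, fun z hz => hmax (Set.mem_image_of_mem _ hz)⟩

end WeakCompactness

namespace MeasureTheory.Lp

variable {α E : Type*} [MeasurableSpace α] {μ : Measure α} {p : ℝ≥0∞}

instance instPosSMulMono [NormedAddCommGroup E] [PartialOrder E] [NormedSpace ℝ E]
    [PosSMulMono ℝ E] : PosSMulMono ℝ (Lp E p μ) where
  smul_le_smul_of_nonneg_left a ha f g hfg := by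
    rw [← coeFn_le] at hfg ⊢
    filter_upwards [hfg, coeFn_smul a f, coeFn_smul a g] with x hx hf hg
    simpa only [hf, hg, Pi.smul_apply] using smul_le_smul_of_nonneg_left hx ha

end MeasureTheory.Lp

namespace MeasureTheory.L2

variable {α : Type*} [MeasurableSpace α] {μ : Measure α}

theorem lintegral_mul_eq_ofReal_inner {F U : Lp ℝ 2 μ} (hF : 0 ≤ F) (hU : 0 ≤ U)
    {f u : α → ℝ≥0∞} (hFf : (fun x => ENNReal.ofReal (F x)) =ᵐ[μ] f)
    (hUu : (fun x => ENNReal.ofReal (U x)) =ᵐ[μ] u) :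
    ∫⁻ x, f x * u x ∂μ = ENNReal.ofReal (inner ℝ F U) := by
  have hF' := (Lp.coeFn_nonneg F).2 hF
  have hU' := (Lp.coeFn_nonneg U).2 hU
  rw [L2.inner_def, ofReal_integral_eq_lintegral_ofReal (L2.integrable_inner F U)]
  · refine lintegral_congr_ae ?_
    filter_upwards [hF', hFf, hUu] with x hx hf hu
    rw [← hf, ← hu, ← ENNReal.ofReal_mul hx, real_inner_comm]
    rfl
  · filter_upwards [hF', hU'] with x hx hy
    exact mul_nonneg hy hx

theorem exists_mem_Icc_ofReal_ae_eq [IsFiniteMeasure μ] {f : α → ℝ≥0∞} (hf : AEMeasurable f μ)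
    (hf_le : ∀ᵐ x ∂μ, f x ≤ 1) :
    ∃ F ∈ Set.Icc (0 : Lp ℝ 2 μ) (Lp.const 2 μ 1), (fun x => ENNReal.ofReal (F x)) =ᵐ[μ] f := by
  have hmem : MemLp (fun x => (f x).toReal) 2 μ :=
    MemLp.of_bound hf.ennreal_toReal.aestronglyMeasurable 1 (by
      filter_upwards [hf_le] with x hx
      simpa using ENNReal.toReal_mono one_ne_top hx)
  refine ⟨hmem.toLp, ⟨?_, ?_⟩, ?_⟩
  · rw [← Lp.coeFn_nonneg]
    filter_upwards [hmem.coeFn_toLp] with x hx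
    simp [hx]
  · rw [← Lp.coeFn_le]
    filter_upwards [hmem.coeFn_toLp, Lp.coeFn_const (p := 2) (μ := μ) (1 : ℝ), hf_le]
      with x hx h1 hx1
    rw [hx, h1]
    simpa using ENNReal.toReal_mono one_ne_top hx1
  · filter_upwards [hmem.coeFn_toLp, hf_le] with x hx hx1
    simp [hx, ENNReal.ofReal_toReal (ne_top_of_le_ne_top one_ne_top hx1)]

theorem exists_isMaxOn_inner_of_mem_Icc [IsFiniteMeasure μ] {ι : Type*} (G₀ : Lp ℝ 2 μ)
    (G : ι → Lp ℝ 2 μ) (c : ι → ℝ≥0) :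
    ∃ U₀ ∈ Set.Icc 0 (Lp.const 2 μ 1) ∩ {U | ∀ i, inner ℝ (G i) U ≤ c i},
      IsMaxOn (inner ℝ G₀) (Set.Icc 0 (Lp.const 2 μ 1) ∩ {U | ∀ i, inner ℝ (G i) U ≤ c i}) U₀ := by
  refine Convex.exists_isMaxOn_of_isClosed_of_isBounded ?_ ?_ ?_ ?_ (innerSL ℝ G₀)
  · rw [Set.ofPred_forall]
    exact (convex_Icc _ _).inter
      (convex_iInter fun i => convex_halfSpace_le (innerₛₗ ℝ (G i)).isLinear _)
  · rw [Set.ofPred_forall]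
    exact isClosed_Icc.inter
      (isClosed_iInter fun i => isClosed_le (innerSL ℝ (G i)).continuous continuous_const)
  · refine (isBounded_closedBall (x := 0) (r := ‖Lp.const 2 μ (1 : ℝ)‖)).subset fun U hU => ?_
    rw [mem_closedBall_zero_iff]
    refine norm_le_norm_of_abs_le_abs ?_
    rw [abs_of_nonneg hU.1.1, abs_of_nonneg (hU.1.1.trans hU.1.2)]
    exact hU.1.2
  · refine ⟨0, ⟨le_rfl, ?_⟩, fun i => by simp⟩
    rw [← Lp.coeFn_le]
    filter_upwards [Lp.coeFn_zero ℝ 2 μ, Lp.coeFn_const (p := 2) (μ := μ) (1 : ℝ)] with x h0 h1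
    rw [h0, h1]
    simp

end MeasureTheory.L2

section Allocation

variable {α ι : Type*} [MeasurableSpace α] {μ : Measure α}

def IsFeasibleAllocation (μ : Measure α) (f : ι → α → ℝ≥0∞) (c : ι → ℝ≥0) (u : α → ℝ≥0∞) :
    Prop :=
  Measurable u ∧ (∀ᵐ x ∂μ, u x ≤ 1) ∧ ∀ i, ∫⁻ x, f i x * u x ∂μ ≤ c i

theorem exists_optimal_allocation_of_le_one [IsFiniteMeasure μ] {f₀ : α → ℝ≥0∞}
    {f : ι → α → ℝ≥0∞} (hf₀ : AEMeasurable f₀ μ) (hf : ∀ i, AEMeasurable (f i) μ)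
    (hf₀_le : ∀ᵐ x ∂μ, f₀ x ≤ 1) (hf_le : ∀ i, ∀ᵐ x ∂μ, f i x ≤ 1) (c : ι → ℝ≥0) :
    ∃ u₀, IsFeasibleAllocation μ f c u₀ ∧ ∀ u, IsFeasibleAllocation μ f c u →
      ∫⁻ x, f₀ x * u x ∂μ ≤ ∫⁻ x, f₀ x * u₀ x ∂μ := by
  obtain ⟨F₀, hF₀, hF₀f⟩ := L2.exists_mem_Icc_ofReal_ae_eq hf₀ hf₀_le
  choose F hF hFf using fun i => L2.exists_mem_Icc_ofReal_ae_eq (hf i) (hf_le i)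
  have constraints_iff : ∀ {U : Lp ℝ 2 μ} {u : α → ℝ≥0∞}, 0 ≤ U →
      (fun x => ENNReal.ofReal (U x)) =ᵐ[μ] u →
      ((∀ i, ∫⁻ x, f i x * u x ∂μ ≤ c i) ↔ ∀ i, inner ℝ (F i) U ≤ c i) := by
    intro U u hU hUu
    refine forall_congr' fun i => ?_
    rw [L2.lintegral_mul_eq_ofReal_inner (hF i).1 hU (hFf i) hUu, ← ENNReal.ofReal_coe_nnreal]
    exact ENNReal.ofReal_le_ofReal_iff (c i).2
  obtain ⟨U₀, ⟨hU₀, hU₀c⟩, hmax⟩ := L2.exists_isMaxOn_inner_of_mem_Icc F₀ F c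
  refine ⟨fun x => ENNReal.ofReal (U₀ x), ⟨(Lp.stronglyMeasurable U₀).measurable.ennreal_ofReal,
    ?_, (constraints_iff hU₀.1 Filter.EventuallyEq.rfl).2 hU₀c⟩, fun u ⟨hu, hu_le, hu_c⟩ => ?_⟩
  · filter_upwards [(Lp.coeFn_le _ _).2 hU₀.2, Lp.coeFn_const (p := 2) (μ := μ) (1 : ℝ)]
      with x hx h1
    rw [h1] at hx
    exact ENNReal.ofReal_le_one.2 hx
  · obtain ⟨U, hU, hUu⟩ := L2.exists_mem_Icc_ofReal_ae_eq hu.aemeasurable hu_le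
    have hUmax : inner ℝ F₀ U ≤ inner ℝ F₀ U₀ := hmax ⟨hU, (constraints_iff hU.1 hUu).1 hu_c⟩
    rw [L2.lintegral_mul_eq_ofReal_inner hF₀.1 hU.1 hF₀f hUu,
      L2.lintegral_mul_eq_ofReal_inner hF₀.1 hU₀.1 hF₀f Filter.EventuallyEq.rfl]
    exact ENNReal.ofReal_le_ofReal hUmax

theorem exists_optimal_allocation_of_le_weight {w : α → ℝ≥0∞} (hw : Measurable w)
    (hw_ne_zero : ∀ᵐ x ∂μ, w x ≠ 0) (hw_int : ∫⁻ x, w x ∂μ ≠ ⊤) {f₀ : α → ℝ≥0∞}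
    {f : ι → α → ℝ≥0∞} (hf₀ : Measurable f₀) (hf : ∀ i, Measurable (f i))
    (hf₀_le : ∀ᵐ x ∂μ, f₀ x ≤ w x) (hf_le : ∀ i, ∀ᵐ x ∂μ, f i x ≤ w x) (c : ι → ℝ≥0) :
    ∃ u₀, IsFeasibleAllocation μ f c u₀ ∧ ∀ u, IsFeasibleAllocation μ f c u →
      ∫⁻ x, f₀ x * u x ∂μ ≤ ∫⁻ x, f₀ x * u₀ x ∂μ := by
  set ν := μ.withDensity w
  have : IsFiniteMeasure ν := isFiniteMeasure_withDensity hw_int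
  have hw_ne_top : ∀ᵐ x ∂μ, w x ≠ ⊤ := (ae_lt_top hw hw_int).mono fun _ hx => hx.ne
  have hνμ : ν ≪ μ := withDensity_absolutelyContinuous μ w
  have hμν : μ ≪ ν := withDensity_absolutelyContinuous' hw.aemeasurable hw_ne_zero
  have lintegral_eq : ∀ {g h : α → ℝ≥0∞}, Measurable g → Measurable h →
      ∫⁻ x, g x * h x ∂μ = ∫⁻ x, (w x)⁻¹ * g x * h x ∂ν := by
    intro g h hg hh
    calc ∫⁻ x, g x * h x ∂μ = ∫⁻ x, (g * h) x ∂(ν.withDensity w⁻¹) := by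
          rw [show ν.withDensity w⁻¹ = μ from withDensity_inv_same hw hw_ne_zero hw_ne_top]
          rfl
      _ = ∫⁻ x, (w x)⁻¹ * g x * h x ∂ν := by
          rw [lintegral_withDensity_eq_lintegral_mul _ hw.inv (hg.mul hh)]
          simp only [Pi.mul_apply, Pi.inv_apply, mul_assoc]
  have feasible_iff : ∀ u, IsFeasibleAllocation μ f c u ↔
      IsFeasibleAllocation ν (fun i x => (w x)⁻¹ * f i x) c u := by
    refine fun u => and_congr_right fun hu =>
      and_congr ⟨fun h => hνμ.ae_le h, fun h => hμν.ae_le h⟩ ?_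
    simp only [lintegral_eq (hf _) hu]
  have le_one : ∀ {g : α → ℝ≥0∞}, (∀ᵐ x ∂μ, g x ≤ w x) → ∀ᵐ x ∂ν, (w x)⁻¹ * g x ≤ 1 := by
    intro g hg
    filter_upwards [hνμ.ae_le hg, hνμ.ae_le hw_ne_zero, hνμ.ae_le hw_ne_top] with x hx h0 htop
    calc (w x)⁻¹ * g x ≤ (w x)⁻¹ * w x := by gcongr
      _ = 1 := ENNReal.inv_mul_cancel h0 htop
  obtain ⟨u₀, hu₀, hmax⟩ := exists_optimal_allocation_of_le_one
    (hw.inv.mul hf₀).aemeasurable (fun i => (hw.inv.mul (hf i)).aemeasurable)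
    (le_one hf₀_le) (fun i => le_one (hf_le i)) c
  refine ⟨u₀, (feasible_iff u₀).2 hu₀, fun u hu => ?_⟩
  rw [lintegral_eq hf₀ hu.1, lintegral_eq hf₀ hu₀.1]
  exact hmax u ((feasible_iff u).1 hu)

end Allocation

theorem resource_distribution_has_solution_general
    (n : ℕ) (μ : Measure (Fin n → ℝ))
    (hfin : ∫⁻ x, ENNReal.ofReal (1 + ‖x‖) ∂μ < ⊤)
    (l : Fin n → ℝ) :
    ∃ u₀ : (Fin n → ℝ) → ℝ≥0∞, Measurable u₀ ∧ (∀ᵐ x ∂μ, u₀ x ≤ 1) ∧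
      (∀ i, ∫⁻ x, ENNReal.ofReal (x i) * u₀ x ∂μ ≤ ENNReal.ofReal (l i)) ∧
      ∀ u : (Fin n → ℝ) → ℝ≥0∞, Measurable u → (∀ᵐ x ∂μ, u x ≤ 1) →
        (∀ i, ∫⁻ x, ENNReal.ofReal (x i) * u x ∂μ ≤ ENNReal.ofReal (l i)) →
        ∫⁻ x, u x ∂μ ≤ ∫⁻ x, u₀ x ∂μ := by
  have hw : Measurable fun x : Fin n → ℝ => ENNReal.ofReal (1 + ‖x‖) := by fun_prop
  obtain ⟨u₀, hu₀, hmax⟩ := exists_optimal_allocation_of_le_weight hw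
    (ae_of_all _ fun x => (ENNReal.ofReal_pos.2 (by positivity)).ne') hfin.ne
    (f₀ := 1) (f := fun i x => ENNReal.ofReal (x i)) measurable_const (fun i => by fun_prop)
    (ae_of_all _ fun x => ENNReal.one_le_ofReal.2 (by linarith [norm_nonneg x]))
    (fun i => ae_of_all _ fun x => ENNReal.ofReal_le_ofReal
      (by linarith [Real.le_norm_self (x i), norm_le_pi_norm x i]))
    fun i => (l i).toNNReal
  refine ⟨u₀, hu₀.1, hu₀.2.1, hu₀.2.2, fun u hu hu_le hu_c => ?_⟩
  simpa using hmax u ⟨hu, hu_le, hu_c⟩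

/-- Existence of a solution of the Houthakker-Johansen resource distribution problem:
maximize `∫ u dμ` over measurable `0 ≤ u ≤ 1` with `∫ xᵢ u(x) μ(dx) ≤ lᵢ`. -/
theorem resource_distribution_has_solution
    (n : ℕ) (μ : Measure (Fin n → ℝ))
    (hsupp : ∀ᵐ x ∂μ, ∀ i, 0 ≤ x i)
    (hfin : ∫⁻ x, ENNReal.ofReal (1 + ‖x‖) ∂μ < ⊤)
    (l : Fin n → ℝ) (hl : ∀ i, 0 ≤ l i) :
    ∃ u₀ : (Fin n → ℝ) → ℝ≥0∞, Measurable u₀ ∧ (∀ᵐ x ∂μ, u₀ x ≤ 1) ∧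
      (∀ i, ∫⁻ x, ENNReal.ofReal (x i) * u₀ x ∂μ ≤ ENNReal.ofReal (l i)) ∧
      ∀ u : (Fin n → ℝ) → ℝ≥0∞, Measurable u → (∀ᵐ x ∂μ, u x ≤ 1) →
        (∀ i, ∫⁻ x, ENNReal.ofReal (x i) * u x ∂μ ≤ ENNReal.ofReal (l i)) →
        ∫⁻ x, u x ∂μ ≤ ∫⁻ x, u₀ x ∂μ :=
  resource_distribution_has_solution_general n μ hfin l
end

section
/- Let μ be a non-negative Borel measure on ℝⁿ₊ with ∫ e^{-A|x|} μ(dx) < ∞ for all A > 0, and define Π(p,p₀) = ∫ (p₀ - p·x)₊ μ(dx) for p ∈ int ℝⁿ₊, p₀ > 0. Then for each fixed p ∈ int ℝⁿ₊, the second distributional derivative of p₀ ↦ Π(p,p₀) satisfies ∂²Π/∂p₀²(p,·) = the pushforward of μ under the map x ↦ p·x, i.e. for smooth compactly supported φ on (0,∞), ∫ Π(p,p₀) φ''(p₀) dp₀ = ∫_{ℝⁿ₊} φ(p·x) μ(dx). -/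
open MeasureTheory Real Set

/-- One-dimensional key identity: integrating `(p₀ - t)₊` against `φ''` gives `φ t`. -/
lemma key_onedim (φ : ℝ → ℝ) (hφ : ContDiff ℝ (⊤ : ℕ∞) φ) (hφc : HasCompactSupport φ) (t : ℝ) :
    ∫ p₀, max (p₀ - t) 0 * deriv (deriv φ) p₀ = φ t := by
  have hφ : ContDiff ℝ (⊤ : ℕ∞) φ := hφ.of_le (by simp)
  have hφ' : ContDiff ℝ (⊤ : ℕ∞) (deriv φ) := (contDiff_infty_iff_deriv.mp hφ).2
  have hφ'' : Continuous (deriv (deriv φ)) := (contDiff_infty_iff_deriv.mp hφ').2.continuous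
  have hφ'c : HasCompactSupport (deriv φ) := hφc.deriv
  have hφ''c : HasCompactSupport (deriv (deriv φ)) := hφ'c.deriv
  -- the function whose derivative is (x - t) * φ''(x)
  set g : ℝ → ℝ := fun x => (x - t) * deriv φ x - φ x with hg
  have hderiv : ∀ x : ℝ, HasDerivAt g ((x - t) * deriv (deriv φ) x) x := by
    intro x
    have h1 : HasDerivAt (fun x : ℝ => x - t) 1 x := (hasDerivAt_id x).sub_const t
    have h2 : HasDerivAt (deriv φ) (deriv (deriv φ) x) x :=
      ((contDiff_infty_iff_deriv.mp hφ').1 x).hasDerivAt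
    have h3 : HasDerivAt φ (deriv φ x) x := ((contDiff_infty_iff_deriv.mp hφ).1 x).hasDerivAt
    have := (h1.mul h2).sub h3
    rw [show (x - t) * deriv (deriv φ) x = 1 * deriv φ x + (x - t) * deriv (deriv φ) x - deriv φ x by ring]
    exact this
  -- integrability of the derivative on Ioi t
  have hint : IntegrableOn (fun x => (x - t) * deriv (deriv φ) x) (Ioi t) := by
    apply Integrable.integrableOn
    apply Continuous.integrable_of_hasCompactSupport
    · exact (continuous_id.sub continuous_const).mul hφ''
    · exact hφ''c.mul_left
  -- g tends to 0 at +∞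
  obtain ⟨R, hR⟩ := hφc.isCompact.bddAbove
  have hg0 : ∀ x : ℝ, R < x → g x = 0 := by
    intro x hx
    have hxφ : x ∉ tsupport φ := fun h => absurd (hR h) (not_le.mpr hx)
    have hxφ' : x ∉ Function.support (deriv φ) := fun h => hxφ (support_deriv_subset h)
    simp only [hg, image_eq_zero_of_notMem_tsupport hxφ,
      Function.notMem_support.mp hxφ', mul_zero, sub_zero]
  have htend : Filter.Tendsto g Filter.atTop (nhds 0) := by
    apply Filter.Tendsto.congr' _ tendsto_const_nhds
    filter_upwards [Filter.Ioi_mem_atTop R] with x hx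
    exact (hg0 x hx).symm
  have hFTC := integral_Ioi_of_hasDerivAt_of_tendsto
    ((hderiv t).continuousAt.continuousWithinAt) (fun x _ => hderiv x) hint htend
  have hgt : g t = -φ t := by simp [hg]
  -- reduce the full integral to one over `Ioi t`
  have hzero : ∀ p₀ ∉ Ioi t, max (p₀ - t) 0 * deriv (deriv φ) p₀ = 0 := by
    intro p₀ hp₀
    have : p₀ - t ≤ 0 := by simpa using not_lt.mp hp₀
    rw [max_eq_right this, zero_mul]
  rw [← setIntegral_eq_integral_of_forall_compl_eq_zero hzero]
  have : ∀ p₀ ∈ Ioi t, max (p₀ - t) 0 * deriv (deriv φ) p₀ = (p₀ - t) * deriv (deriv φ) p₀ := by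
    intro p₀ hp₀
    rw [max_eq_left (le_of_lt (sub_pos.mpr hp₀))]
  rw [setIntegral_congr_fun measurableSet_Ioi this, hFTC, hgt]
  ring

/-- The second distributional derivative in `p₀` of the profit function
`Π(p,p₀) = ∫ (p₀ - p·x)₊ μ(dx)` is the pushforward of `μ` under `x ↦ p·x`:
for every smooth compactly supported test function `φ` on `(0,∞)`,
`∫ Π(p,p₀) φ''(p₀) dp₀ = ∫ φ(p·x) μ(dx)`. -/
theorem profit_second_derivative_radon
    (n : ℕ) (μ : Measure (Fin n → ℝ))
    (hsupp : ∀ᵐ x ∂μ, ∀ i, 0 ≤ x i)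
    (hfin : ∀ A > (0:ℝ), ∫⁻ x, ENNReal.ofReal (Real.exp (-A * ‖x‖)) ∂μ < ⊤)
    (Pi : (Fin n → ℝ) → ℝ → ℝ)
    (hPi : Pi = fun p p₀ => ∫ x, max (p₀ - ∑ i, p i * x i) 0 ∂μ)
    (p : Fin n → ℝ) (hp : ∀ i, 0 < p i)
    (φ : ℝ → ℝ) (hφ : ContDiff ℝ (⊤ : ℕ∞) φ) (hφc : HasCompactSupport φ)
    (hφs : tsupport φ ⊆ Ioi (0:ℝ)) :
    ∫ p₀, Pi p p₀ * deriv (deriv φ) p₀ = ∫ x, φ (∑ i, p i * x i) ∂μ := by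
  classical
  -- notation
  set ψ : ℝ → ℝ := deriv (deriv φ) with hψ
  have hφ2 : ContDiff ℝ (⊤ : ℕ∞) φ := hφ.of_le (by simp)
  have hφ' : ContDiff ℝ (⊤ : ℕ∞) (deriv φ) := (contDiff_infty_iff_deriv.mp hφ2).2
  have hψcont : Continuous ψ := (contDiff_infty_iff_deriv.mp hφ').2.continuous
  have hψc : HasCompactSupport ψ := hφc.deriv.deriv
  -- measure of norm-balls is finite (Markov inequality)
  have hball : ∀ M : ℝ, μ {x | ‖x‖ ≤ M} < ⊤ := by
    intro M
    have h1 := hfin 1 one_pos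
    have hsub : {x : Fin n → ℝ | ‖x‖ ≤ M} ⊆
        {x | ENNReal.ofReal (Real.exp (-M)) ≤ ENNReal.ofReal (Real.exp (-1 * ‖x‖))} := by
      intro x hx
      apply ENNReal.ofReal_le_ofReal
      apply Real.exp_le_exp.mpr
      simp only [neg_mul, one_mul, neg_le_neg_iff]
      exact hx
    have hmeas : AEMeasurable (fun x : Fin n → ℝ => ENNReal.ofReal (Real.exp (-1 * ‖x‖))) μ := by
      apply Measurable.aemeasurable
      exact (measurable_norm.const_mul (-1)).exp.ennreal_ofReal
    calc μ {x | ‖x‖ ≤ M}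
        ≤ μ {x | ENNReal.ofReal (Real.exp (-M)) ≤ ENNReal.ofReal (Real.exp (-1 * ‖x‖))} :=
          measure_mono hsub
      _ ≤ (∫⁻ x, ENNReal.ofReal (Real.exp (-1 * ‖x‖)) ∂μ) / ENNReal.ofReal (Real.exp (-M)) :=
          meas_ge_le_lintegral_div hmeas
            (by simp [ENNReal.ofReal_eq_zero, not_le, Real.exp_pos])
            ENNReal.ofReal_ne_top
      _ < ⊤ := ENNReal.div_lt_top h1.ne
          (by simp [ENNReal.ofReal_eq_zero, not_le, Real.exp_pos])
  -- σ-finiteness of μ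
  haveI : SigmaFinite μ := by
    refine ⟨⟨⟨fun k => {x | ‖x‖ ≤ (k : ℝ)}, fun _ => trivial, fun k => hball k, ?_⟩⟩⟩
    ext x
    simp only [mem_iUnion, mem_setOf_eq, mem_univ, iff_true]
    obtain ⟨k, hk⟩ := exists_nat_ge ‖x‖
    exact ⟨k, hk⟩
  -- bound data: support of ψ
  obtain ⟨R₀, hR₀⟩ := hψc.isCompact.bddAbove
  set R : ℝ := max R₀ 1 with hRdef
  have hRpos : (0:ℝ) < R := lt_of_lt_of_le one_pos (le_max_right _ _)
  have hψR : ∀ x : ℝ, R < x → ψ x = 0 := by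
    intro x hx
    apply image_eq_zero_of_notMem_tsupport
    intro h
    exact absurd (le_trans (hR₀ h) (le_max_left _ _)) (not_le.mpr hx)
  obtain ⟨Cψ, hCψ⟩ := hψc.exists_bound_of_continuous hψcont
  have hCψ0 : 0 ≤ Cψ := le_trans (norm_nonneg _) (hCψ 0)
  -- the M bound for x
  set M : ℝ := ∑ i, R / p i with hMdef
  have hM0 : 0 ≤ M := Finset.sum_nonneg fun i _ => div_nonneg hRpos.le (hp i).le
  -- the dot product
  set t : (Fin n → ℝ) → ℝ := fun x => ∑ i, p i * x i with ht
  -- for x with nonneg coordinates and t x ≤ R, ‖x‖ ≤ M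
  have hxM : ∀ x : Fin n → ℝ, (∀ i, 0 ≤ x i) → t x ≤ R → ‖x‖ ≤ M := by
    intro x hx htx
    rw [pi_norm_le_iff_of_nonneg hM0]
    intro i
    rw [Real.norm_eq_abs, abs_of_nonneg (hx i)]
    have h1 : p i * x i ≤ R := by
      calc p i * x i ≤ ∑ j, p j * x j :=
            Finset.single_le_sum (fun j _ => mul_nonneg (hp j).le (hx j)) (Finset.mem_univ i)
        _ ≤ R := htx
    have h2 : x i ≤ R / p i := (le_div_iff₀ (hp i)).mpr (by linarith [mul_comm (p i) (x i)])
    calc x i ≤ R / p i := h2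
      _ ≤ M := Finset.single_le_sum (fun j _ => div_nonneg hRpos.le (hp j).le)
          (Finset.mem_univ i)
  -- the integrand on the product space
  set F : ℝ × (Fin n → ℝ) → ℝ := fun z => max (z.1 - t z.2) 0 * ψ z.1 with hF
  have hFcont : Continuous F := by
    apply Continuous.mul
    · apply Continuous.max _ continuous_const
      apply Continuous.sub continuous_fst
      exact continuous_finset_sum _ fun i _ =>
        (continuous_const.mul ((continuous_apply i).comp continuous_snd))
    · exact hψcont.comp continuous_fst
  -- the dominating function
  set G : ℝ × (Fin n → ℝ) → ℝ := fun z =>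
    indicator (Icc 0 R) (fun _ => R * Cψ) z.1 * indicator {x | ‖x‖ ≤ M} (fun _ => 1) z.2
    with hG
  have hGint : Integrable G (volume.prod μ) := by
    apply Integrable.mul_prod
    · rw [integrable_indicator_iff measurableSet_Icc]
      exact (integrableOn_const_iff).mpr (Or.inr (by simp [measure_Icc_lt_top]))
    · rw [integrable_indicator_iff (by
        simpa using measurableSet_le measurable_norm measurable_const)]
      refine (integrableOn_const_iff).mpr (Or.inr ?_)
      exact hball M
  -- a.e. (on the product) all coordinates of the second component are nonneg
  have haep : ∀ᵐ (z : ℝ × (Fin n → ℝ)) ∂(volume.prod μ), ∀ i, 0 ≤ z.2 i := by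
    rw [ae_iff]
    have hset : {z : ℝ × (Fin n → ℝ) | ¬ ∀ i, 0 ≤ z.2 i}
        = univ ×ˢ {x | ¬ ∀ i, 0 ≤ x i} := by
      ext z; simp [Set.mem_prod]
    rw [hset, Measure.prod_prod, ae_iff.mp hsupp, mul_zero]
  -- the bound
  have hbound : ∀ᵐ z ∂(volume.prod μ), ‖F z‖ ≤ G z := by
    filter_upwards [haep] with z hz
    have hG0 : 0 ≤ G z := by
      apply mul_nonneg
      · exact indicator_nonneg (fun _ _ => mul_nonneg hRpos.le hCψ0) _
      · exact indicator_nonneg (fun _ _ => zero_le_one) _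
    by_cases hψz : ψ z.1 = 0
    · simp only [hF, hψz, mul_zero, norm_zero]; exact hG0
    by_cases hmax : max (z.1 - t z.2) 0 = 0
    · simp only [hF, hmax, zero_mul, norm_zero]; exact hG0
    -- now max > 0, so t z.2 < z.1; and z.1 ∈ support ψ so 0 < z.1 ≤ R
    have htz : t z.2 < z.1 := by
      by_contra h
      exact hmax (max_eq_right (by linarith [not_lt.mp h]))
    have hz1R : z.1 ≤ R := by
      by_contra h
      exact hψz (hψR z.1 (not_le.mp h))
    have hz1pos : 0 < z.1 := by
      have hsub1 : tsupport (deriv (deriv φ)) ⊆ tsupport (deriv φ) :=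
        closure_minimal support_deriv_subset (isClosed_tsupport _)
      have hsub2 : tsupport (deriv φ) ⊆ tsupport φ :=
        closure_minimal support_deriv_subset (isClosed_tsupport _)
      have : z.1 ∈ tsupport φ :=
        hsub2 (hsub1 (subset_closure (Function.mem_support.mpr hψz)))
      exact hφs this
    have ht0 : 0 ≤ t z.2 := Finset.sum_nonneg fun i _ => mul_nonneg (hp i).le (hz i)
    have hnormz : ‖z.2‖ ≤ M := hxM z.2 hz (le_trans (le_of_lt htz) hz1R)
    have hGval : G z = R * Cψ := by
      rw [hG]
      simp only
      rw [indicator_of_mem (by exact ⟨hz1pos.le, hz1R⟩ : z.1 ∈ Icc 0 R),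
        indicator_of_mem (by exact hnormz : z.2 ∈ {x | ‖x‖ ≤ M})]
      ring
    rw [hGval, hF]
    simp only [Real.norm_eq_abs, abs_mul]
    apply mul_le_mul _ _ (abs_nonneg _) hRpos.le
    · rw [abs_of_nonneg (le_max_right _ _)]
      apply max_le _ hRpos.le
      linarith
    · simpa [Real.norm_eq_abs] using hCψ z.1
  have hFint : Integrable F (volume.prod μ) :=
    Integrable.mono' hGint hFcont.aestronglyMeasurable hbound
  -- Fubini
  have hswap := integral_integral_swap (f := fun p₀ x => F (p₀, x))
    (μ := (volume : Measure ℝ)) (ν := μ) (by exact hFint)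
  calc ∫ p₀, Pi p p₀ * ψ p₀
      = ∫ p₀, ∫ x, F (p₀, x) ∂μ := by
        apply integral_congr_ae
        filter_upwards with p₀
        rw [hPi, hF]
        simp only
        rw [← integral_mul_const]
    _ = ∫ x, ∫ p₀, F (p₀, x) ∂(volume : Measure ℝ) ∂μ := hswap
    _ = ∫ x, φ (∑ i, p i * x i) ∂μ := by
        apply integral_congr_ae
        filter_upwards with x
        exact key_onedim φ hφ hφc (t x)
end

section
/- For the Cobb–Douglas production function F(l₁,l₂) = C l₁^{α₁/(α₁+α₂+1)} l₂^{α₂/(α₁+α₂+1)} with C > 0, α₁ ≥ 1, α₂ ≥ 1, the profit function Π(p₁,p₂,p₀) = sup_{l ≥ 0}(p₀ F(l) - p·l) equals A·(B(α₁,α₂)/((α₁+α₂)(α₁+α₂+1))) · p₀^{α₁+α₂+1} p₁^{-α₁} p₂^{-α₂}, where A = C^{α₁+α₂+1} ((α₁+α₂) α₁^{α₁} α₂^{α₂}/(α₁+α₂+1)^{α₁+α₂}) / B(α₁,α₂) and B is the beta function. -/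
noncomputable def realBeta (a b : ℝ) : ℝ := Real.Gamma a * Real.Gamma b / Real.Gamma (a + b)

/-!
Put `s = α₁ + α₂ + 1`. The exponents `a = α₁ / s`, `b = α₂ / s` and `c = 1 / s` are weights,
`a + b + c = 1`. With `K = p₀ C (a / p₁)^a (b / p₂)^b`, weighted AM–GM applied to
`p₁ l₁ / a`, `p₂ l₂ / b` and `K^(1/c)` gives `p₀ F(l) ≤ p₁ l₁ + p₂ l₂ + c K^(1/c)`, with equality at
`l₁ = (a / p₁) K^(1/c)`, `l₂ = (b / p₂) K^(1/c)`. So the profit is `c K^(1/c) = K^s / s`; in the stated closed form the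
Beta factors of `A` and of the second factor cancel.
-/

open Real

theorem rpow_mul_div_mul_rpow_div {a p x : ℝ} (ha : 0 < a) (hp : 0 < p) (hx : 0 ≤ x) :
    (p * x / a) ^ a * (a / p) ^ a = x ^ a := by
  rw [← mul_rpow (by positivity) (by positivity)]
  congr 1
  field_simp

namespace CobbDouglas

variable {a b c p₀ C p₁ p₂ : ℝ}

theorem profit_le (ha : 0 < a) (hb : 0 < b) (hc : 0 < c) (habc : a + b + c = 1)
    (hp₀ : 0 ≤ p₀) (hC : 0 ≤ C) (hp₁ : 0 < p₁) (hp₂ : 0 < p₂) {l₁ l₂ : ℝ}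
    (hl₁ : 0 ≤ l₁) (hl₂ : 0 ≤ l₂) :
    p₀ * (C * l₁ ^ a * l₂ ^ b) - p₁ * l₁ - p₂ * l₂ ≤
      c * (p₀ * C * (a / p₁) ^ a * (b / p₂) ^ b) ^ c⁻¹ := by
  set K := p₀ * C * (a / p₁) ^ a * (b / p₂) ^ b
  have amgm := geom_mean_le_arith_mean3_weighted ha.le hb.le hc.le
    (by positivity : 0 ≤ p₁ * l₁ / a) (by positivity : 0 ≤ p₂ * l₂ / b)
    (by positivity : 0 ≤ K ^ c⁻¹) habc
  have hprod : (p₁ * l₁ / a) ^ a * (p₂ * l₂ / b) ^ b * (K ^ c⁻¹) ^ c =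
      p₀ * (C * l₁ ^ a * l₂ ^ b) := by
    rw [rpow_inv_rpow (by positivity) hc.ne', ← rpow_mul_div_mul_rpow_div ha hp₁ hl₁,
      ← rpow_mul_div_mul_rpow_div hb hp₂ hl₂]
    ring
  rw [hprod, mul_div_cancel₀ _ ha.ne', mul_div_cancel₀ _ hb.ne'] at amgm
  linarith

theorem exists_profit_eq (ha : 0 < a) (hb : 0 < b) (hc : 0 < c) (habc : a + b + c = 1)
    (hp₀ : 0 ≤ p₀) (hC : 0 ≤ C) (hp₁ : 0 < p₁) (hp₂ : 0 < p₂) :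
    ∃ l₁ l₂ : ℝ, 0 ≤ l₁ ∧ 0 ≤ l₂ ∧
      c * (p₀ * C * (a / p₁) ^ a * (b / p₂) ^ b) ^ c⁻¹ =
        p₀ * (C * l₁ ^ a * l₂ ^ b) - p₁ * l₁ - p₂ * l₂ := by
  set K := p₀ * C * (a / p₁) ^ a * (b / p₂) ^ b
  have hK : 0 ≤ K := by positivity
  set V := K ^ c⁻¹
  have hV : 0 ≤ V := by positivity
  refine ⟨a / p₁ * V, b / p₂ * V, by positivity, by positivity, ?_⟩
  have houtput : p₀ * (C * (a / p₁ * V) ^ a * (b / p₂ * V) ^ b) = V := by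
    calc p₀ * (C * (a / p₁ * V) ^ a * (b / p₂ * V) ^ b) = K * V ^ a * V ^ b := by
          rw [mul_rpow (by positivity) hV, mul_rpow (by positivity) hV]; ring
      _ = V ^ (c + a + b) := by
          rw [rpow_add' hV (by linarith), rpow_add' hV (by linarith),
            rpow_inv_rpow hK hc.ne']
      _ = V := by rw [show c + a + b = 1 by linarith, rpow_one]
  rw [houtput]
  field_simp
  linear_combination V * habc

theorem isLUB_profit (ha : 0 < a) (hb : 0 < b) (hc : 0 < c) (habc : a + b + c = 1)
    (hp₀ : 0 ≤ p₀) (hC : 0 ≤ C) (hp₁ : 0 < p₁) (hp₂ : 0 < p₂) :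
    IsLUB {z : ℝ | ∃ l₁ l₂ : ℝ, 0 ≤ l₁ ∧ 0 ≤ l₂ ∧
        z = p₀ * (C * l₁ ^ a * l₂ ^ b) - p₁ * l₁ - p₂ * l₂}
      (c * (p₀ * C * (a / p₁) ^ a * (b / p₂) ^ b) ^ c⁻¹) := by
  refine ⟨?_, fun u hu => hu (exists_profit_eq ha hb hc habc hp₀ hC hp₁ hp₂)⟩
  rintro z ⟨l₁, l₂, hl₁, hl₂, rfl⟩
  exact profit_le ha hb hc habc hp₀ hC hp₁ hp₂ hl₁ hl₂

end CobbDouglas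

theorem realBeta_pos {a b : ℝ} (ha : 0 < a) (hb : 0 < b) : 0 < realBeta a b := by
  have := Gamma_pos_of_pos ha
  have := Gamma_pos_of_pos hb
  have := Gamma_pos_of_pos (add_pos ha hb)
  unfold realBeta
  positivity

/-- Profit function of the Cobb–Douglas production function
`F(l₁,l₂) = C l₁^{α₁/(α₁+α₂+1)} l₂^{α₂/(α₁+α₂+1)}`. -/
theorem cobb_douglas_profit
    (C α₁ α₂ : ℝ) (hC : 0 < C) (hα₁ : 1 ≤ α₁) (hα₂ : 1 ≤ α₂)
    (A : ℝ)
    (hA : A = C ^ (α₁ + α₂ + 1) *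
      ((α₁ + α₂) * α₁ ^ α₁ * α₂ ^ α₂ / (α₁ + α₂ + 1) ^ (α₁ + α₂)) / realBeta α₁ α₂)
    (p₁ p₂ p₀ : ℝ) (hp₁ : 0 < p₁) (hp₂ : 0 < p₂) (hp₀ : 0 < p₀) :
    IsLUB {z : ℝ | ∃ l₁ l₂ : ℝ, 0 ≤ l₁ ∧ 0 ≤ l₂ ∧
        z = p₀ * (C * l₁ ^ (α₁ / (α₁ + α₂ + 1)) * l₂ ^ (α₂ / (α₁ + α₂ + 1)))
              - p₁ * l₁ - p₂ * l₂}
      (A * (realBeta α₁ α₂ / ((α₁ + α₂) * (α₁ + α₂ + 1))) *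
        p₀ ^ (α₁ + α₂ + 1) * p₁ ^ (-α₁) * p₂ ^ (-α₂)) := by
  have hα₁0 : 0 < α₁ := by linarith
  have hα₂0 : 0 < α₂ := by linarith
  set s := α₁ + α₂ + 1 with hs_def
  have hs : 0 < s := by positivity
  have hlub := CobbDouglas.isLUB_profit (div_pos hα₁0 hs) (div_pos hα₂0 hs) (inv_pos.2 hs)
    (by field_simp; exact hs_def.symm) hp₀.le hC.le hp₁ hp₂
  convert hlub using 1
  have hpow : ∀ {x y : ℝ}, 0 ≤ x → (x ^ (y / s)) ^ s = x ^ y := fun hx => by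
    rw [← rpow_mul hx, div_mul_cancel₀ _ hs.ne']
  rw [inv_inv, mul_rpow (by positivity) (by positivity), mul_rpow (by positivity) (by positivity),
    mul_rpow hp₀.le hC.le, hpow (by positivity), hpow (by positivity),
    div_rpow (by positivity) hp₁.le, div_rpow (by positivity) hp₂.le,
    div_rpow hα₁0.le hs.le, div_rpow hα₂0.le hs.le,
    hA, rpow_neg hp₁.le, rpow_neg hp₂.le, rpow_add hs]
  have := (realBeta_pos hα₁0 hα₂0).ne'
  field_simp
end

section
/- Let β₁, β₂, b > 0. Then for all p₁, p₂ > 0, (β₁√p₁ + β₂√p₂)^{-b} = ∫_{ℝ²₊} e^{-p₁x₁ - p₂x₂} H(x₁,x₂) dx₁dx₂, where H(x₁,x₂) = (2^{b-1}/π) β₁β₂ (Γ(b/2+1)/Γ(b)) (x₁x₂)^{-3/2} (β₁²/x₁ + β₂²/x₂)^{-b/2-1}. -/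
/-!
Gamma subordination: with `q = β₁ √p₁ + β₂ √p₂`, `q ^ (-b) = Γ(b)⁻¹ ∫₀^∞ s ^ (b - 1) e ^ (-q s) ds`,
and `e ^ (-β s √p)` is the Laplace transform of the Lévy density
`L(β s, x) = β s / (2 √π) x ^ (-3/2) e ^ (-(β s) ^ 2 / (4 x))`. By Fubini, `q ^ (-b)` is then the
double Laplace transform of `Γ(b)⁻¹ ∫₀^∞ s ^ (b - 1) L(β₁ s, x₁) L(β₂ s, x₂) ds`, a Gaussian moment
`∫₀^∞ s ^ (b + 1) e ^ (-A s ^ 2 / 4) ds` with `A = β₁ ^ 2 / x₁ + β₂ ^ 2 / x₂`, which is where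
`Γ(b / 2 + 1)` and `A ^ (-b / 2 - 1)` come from.

The Laplace transform of `L` reduces, after `x = t ^ 2`, to
`∫₀^∞ e ^ (-(a t - d / t) ^ 2) t ^ (-2) dt = √π / (2 d)`: the reflection `t ↦ d / (a t)` shows that
`a` and `d / t ^ 2` contribute equally to `∫₀^∞ (a + d / t ^ 2) e ^ (-(a t - d / t) ^ 2) dt`, and
that integral is `√π` by the Cauchy–Schlömilch substitution `u = a t - d / t`.
-/

open MeasureTheory Real Set

section ProductKernel

variable {α β γ : Type*} [MeasurableSpace α] [MeasurableSpace β] [MeasurableSpace γ]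
  {μ : Measure α} {ν : Measure β} {ρ : Measure γ} [SFinite μ] [SFinite ν] [SFinite ρ]
  {w : γ → ℝ} {f : γ → α → ℝ} {g : γ → β → ℝ}

theorem integrable_mul_mul_prod
    (hm : AEStronglyMeasurable (fun z : (α × β) × γ => w z.2 * (f z.2 z.1.1 * g z.2 z.1.2))
      ((μ.prod ν).prod ρ))
    (hf : ∀ᵐ s ∂ρ, Integrable (f s) μ) (hg : ∀ᵐ s ∂ρ, Integrable (g s) ν)
    (hint : Integrable (fun s => ‖w s‖ * ((∫ x, ‖f s x‖ ∂μ) * ∫ y, ‖g s y‖ ∂ν)) ρ) :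
    Integrable (fun z : (α × β) × γ => w z.2 * (f z.2 z.1.1 * g z.2 z.1.2))
      ((μ.prod ν).prod ρ) := by
  refine (integrable_prod_iff' hm).2 ⟨?_, hint.congr (Filter.Eventually.of_forall fun s => ?_)⟩
  · filter_upwards [hf, hg] with s hfs hgs
    exact (hfs.mul_prod hgs).const_mul (w s)
  · simp only [norm_mul]
    rw [integral_const_mul]
    exact congrArg _ (integral_prod_mul (fun x => ‖f s x‖) (fun y => ‖g s y‖)).symm

theorem integral_integral_integral_mul_mul
    (hm : AEStronglyMeasurable (fun z : (α × β) × γ => w z.2 * (f z.2 z.1.1 * g z.2 z.1.2))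
      ((μ.prod ν).prod ρ))
    (hf : ∀ᵐ s ∂ρ, Integrable (f s) μ) (hg : ∀ᵐ s ∂ρ, Integrable (g s) ν)
    (hint : Integrable (fun s => ‖w s‖ * ((∫ x, ‖f s x‖ ∂μ) * ∫ y, ‖g s y‖ ∂ν)) ρ) :
    ∫ x, ∫ y, ∫ s, w s * (f s x * g s y) ∂ρ ∂ν ∂μ =
      ∫ s, w s * ((∫ x, f s x ∂μ) * ∫ y, g s y ∂ν) ∂ρ := by
  have hF := integrable_mul_mul_prod hm hf hg hint
  calc ∫ x, ∫ y, ∫ s, w s * (f s x * g s y) ∂ρ ∂ν ∂μ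
      = ∫ z, ∫ s, w s * (f s z.1 * g s z.2) ∂ρ ∂(μ.prod ν) :=
        (integral_prod _ hF.integral_prod_left).symm
    _ = ∫ s, ∫ z, w s * (f s z.1 * g s z.2) ∂(μ.prod ν) ∂ρ := integral_integral_swap hF
    _ = ∫ s, w s * ((∫ x, f s x ∂μ) * ∫ y, g s y ∂ν) ∂ρ := by
        simp only [integral_const_mul, integral_prod_mul]

end ProductKernel

section Reflection

variable {E : Type*} [NormedAddCommGroup E] [NormedSpace ℝ E] {κ : ℝ}

lemma image_const_div_Ioi (hκ : 0 < κ) : (κ / ·) '' Ioi 0 = Ioi 0 := by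
  ext y
  refine ⟨fun ⟨t, ht, hty⟩ => hty ▸ div_pos hκ ht, fun hy => ⟨κ / y, div_pos hκ hy, ?_⟩⟩
  field_simp [(mem_Ioi.1 hy).ne']

lemma hasDerivWithinAt_const_div {t : ℝ} (ht : t ∈ Ioi 0) :
    HasDerivWithinAt (κ / ·) (-(κ / t ^ 2)) (Ioi 0) t := by
  have h := (hasDerivAt_inv (ne_of_gt ht)).const_mul κ
  simp only [← div_eq_mul_inv, mul_neg] at h
  exact h.hasDerivWithinAt

lemma injOn_const_div (hκ : 0 < κ) : InjOn (κ / ·) (Ioi 0) :=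
  fun x hx y hy h => by
    have : κ / x = κ / y := h
    rwa [div_eq_div_iff (mem_Ioi.1 hx).ne' (mem_Ioi.1 hy).ne', mul_right_inj' hκ.ne',
      eq_comm] at this

theorem integrableOn_Ioi_comp_const_div_iff (g : ℝ → E) (hκ : 0 < κ) :
    IntegrableOn (fun t => (κ / t ^ 2) • g (κ / t)) (Ioi 0) ↔ IntegrableOn g (Ioi 0) := by
  have := integrableOn_image_iff_integrableOn_abs_deriv_smul measurableSet_Ioi
    (fun _ => hasDerivWithinAt_const_div) (injOn_const_div hκ) g
  rw [image_const_div_Ioi hκ] at this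
  rw [this]
  refine integrableOn_congr_fun (fun t ht => ?_) measurableSet_Ioi
  rw [abs_neg, abs_of_pos (div_pos hκ (pow_pos ht 2))]

theorem integral_comp_const_div_Ioi (g : ℝ → E) (hκ : 0 < κ) :
    ∫ t in Ioi 0, (κ / t ^ 2) • g (κ / t) = ∫ t in Ioi 0, g t := by
  have := integral_image_eq_integral_abs_deriv_smul measurableSet_Ioi
    (fun _ => hasDerivWithinAt_const_div) (injOn_const_div hκ) g
  rw [image_const_div_Ioi hκ] at this
  rw [this]
  refine setIntegral_congr_fun measurableSet_Ioi (fun t ht => ?_)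
  rw [abs_neg, abs_of_pos (div_pos hκ (pow_pos ht 2))]

end Reflection

section CauchySchlomilch

variable {a d : ℝ}

lemma hasDerivWithinAt_mul_sub_div {t : ℝ} (ht : t ∈ Ioi 0) :
    HasDerivWithinAt (fun t => a * t - d / t) (a + d / t ^ 2) (Ioi 0) t := by
  have h := ((hasDerivAt_id' t).const_mul a).fun_sub ((hasDerivAt_inv (ne_of_gt ht)).const_mul d)
  simp only [mul_one, mul_neg, sub_neg_eq_add, ← div_eq_mul_inv] at h
  exact h.hasDerivWithinAt

lemma strictMonoOn_mul_sub_div (ha : 0 < a) (hd : 0 < d) :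
    StrictMonoOn (fun t => a * t - d / t) (Ioi 0) := by
  intro x hx y _ hxy
  have : d / y < d / x := div_lt_div_of_pos_left hd hx hxy
  dsimp only
  nlinarith

lemma image_mul_sub_div_Ioi (ha : 0 < a) (hd : 0 < d) :
    (fun t => a * t - d / t) '' Ioi 0 = univ := by
  refine eq_univ_of_forall fun y => ?_
  -- the positive root of `a t ^ 2 - y t - d = 0`
  set r := √(y ^ 2 + 4 * a * d)
  have hr : r ^ 2 = y ^ 2 + 4 * a * d := sq_sqrt (by positivity)
  have hyr : 0 < y + r := by
    have : |y| < r := by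
      rw [← sqrt_sq_eq_abs]
      exact sqrt_lt_sqrt (sq_nonneg y) (by linarith [mul_pos ha hd])
    linarith [neg_abs_le y]
  refine ⟨(y + r) / (2 * a), mem_Ioi.2 (by positivity), ?_⟩
  field_simp
  nlinarith

lemma abs_add_div_sq_smul_exp {t : ℝ} (ha : 0 < a) (hd : 0 < d) (ht : t ∈ Ioi 0) :
    |a + d / t ^ 2| • exp (-(a * t - d / t) ^ 2) =
      (a + d / t ^ 2) * exp (-(a * t - d / t) ^ 2) := by
  rw [smul_eq_mul, abs_of_pos (by have := mem_Ioi.1 ht; positivity)]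

theorem integrableOn_add_div_sq_mul_exp_neg_mul_sub_div_sq (ha : 0 < a) (hd : 0 < d) :
    IntegrableOn (fun t => (a + d / t ^ 2) * exp (-(a * t - d / t) ^ 2)) (Ioi 0) := by
  have h := integrableOn_image_iff_integrableOn_abs_deriv_smul measurableSet_Ioi
    (fun _ => hasDerivWithinAt_mul_sub_div) (strictMonoOn_mul_sub_div ha hd).injOn
    (fun u => exp (-u ^ 2))
  rw [image_mul_sub_div_Ioi ha hd, integrableOn_univ,
    integrableOn_congr_fun (fun t => abs_add_div_sq_smul_exp ha hd) measurableSet_Ioi] at h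
  exact h.1 (by simpa using integrable_exp_neg_mul_sq one_pos)

theorem integral_add_div_sq_mul_exp_neg_mul_sub_div_sq (ha : 0 < a) (hd : 0 < d) :
    ∫ t in Ioi 0, (a + d / t ^ 2) * exp (-(a * t - d / t) ^ 2) = √π := by
  have h := integral_image_eq_integral_abs_deriv_smul measurableSet_Ioi
    (fun _ => hasDerivWithinAt_mul_sub_div) (strictMonoOn_mul_sub_div ha hd).injOn
    (fun u => exp (-u ^ 2))
  rw [image_mul_sub_div_Ioi ha hd, Measure.restrict_univ,
    setIntegral_congr_fun measurableSet_Ioi (fun t => abs_add_div_sq_smul_exp ha hd)] at h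
  rw [← h]
  simpa using integral_gaussian 1

lemma exp_neg_mul_sub_div_sq_comp_div (ha : a ≠ 0) (hd : d ≠ 0) (t : ℝ) :
    exp (-(a * (d / a / t) - d / (d / a / t)) ^ 2) = exp (-(a * t - d / t) ^ 2) := by
  by_cases ht : t = 0
  · simp [ht]
  congr 2
  field_simp
  ring

theorem integrableOn_exp_neg_mul_sub_div_sq_div_sq (ha : 0 < a) (hd : 0 < d) :
    IntegrableOn (fun t => exp (-(a * t - d / t) ^ 2) / t ^ 2) (Ioi 0) := by
  refine ((integrableOn_add_div_sq_mul_exp_neg_mul_sub_div_sq ha hd).const_mul d⁻¹).mono'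
    (Measurable.aestronglyMeasurable (by fun_prop)) ?_
  filter_upwards [ae_restrict_mem measurableSet_Ioi] with t ht
  have ht : 0 < t := ht
  rw [norm_of_nonneg (by positivity), div_le_iff₀ (by positivity)]
  field_simp
  nlinarith [exp_pos (-(a * t - d / t) ^ 2), mul_pos ha (pow_pos ht 2)]

theorem integral_exp_neg_mul_sub_div_sq_div_sq (ha : 0 < a) (hd : 0 < d) :
    ∫ t in Ioi 0, exp (-(a * t - d / t) ^ 2) / t ^ 2 = √π / (2 * d) := by
  let φ : ℝ → ℝ := fun t => exp (-(a * t - d / t) ^ 2)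
  have hJ : IntegrableOn (fun t => φ t / t ^ 2) (Ioi 0) :=
    integrableOn_exp_neg_mul_sub_div_sq_div_sq ha hd
  -- `φ` is invariant under the reflection `t ↦ (d / a) / t`
  have hrefl : ∀ t, (d / a / t ^ 2) • φ (d / a / t) = d / a * (φ t / t ^ 2) := fun t => by
    simp only [φ, smul_eq_mul, exp_neg_mul_sub_div_sq_comp_div ha.ne' hd.ne' t]; ring
  have hφ : IntegrableOn φ (Ioi 0) := by
    rw [← integrableOn_Ioi_comp_const_div_iff φ (div_pos hd ha)]
    simp only [hrefl]
    exact hJ.const_mul (d / a)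
  have hφJ : ∫ t in Ioi 0, φ t = d / a * ∫ t in Ioi 0, φ t / t ^ 2 := by
    rw [← integral_comp_const_div_Ioi φ (div_pos hd ha)]
    simp only [hrefl, integral_const_mul]
  have hsum : √π = a * (∫ t in Ioi 0, φ t) + d * ∫ t in Ioi 0, φ t / t ^ 2 := by
    rw [← integral_add_div_sq_mul_exp_neg_mul_sub_div_sq ha hd, ← integral_const_mul,
      ← integral_const_mul, ← integral_add (hφ.const_mul a) (hJ.const_mul d)]
    congr 1 with t
    ring
  change ∫ t in Ioi 0, φ t / t ^ 2 = √π / (2 * d)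
  rw [hsum, hφJ]
  field_simp
  ring

end CauchySchlomilch

noncomputable def levyDensity (c x : ℝ) : ℝ :=
  c / (2 * √π) * x ^ (-(3 : ℝ) / 2) * exp (-c ^ 2 / (4 * x))

section Levy

variable {c p : ℝ}

lemma levyDensity_nonneg {x : ℝ} (hc : 0 ≤ c) (hx : 0 < x) : 0 ≤ levyDensity c x := by
  unfold levyDensity
  positivity

lemma rpow_smul_exp_mul_levyDensity_rpow_two (hp : 0 < p) {t : ℝ} (ht : 0 < t) :
    t ^ ((2 : ℝ) - 1) • (exp (-p * t ^ (2 : ℝ)) * levyDensity c (t ^ (2 : ℝ))) =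
      c / (2 * √π) * exp (-(c * √p)) * (exp (-(√p * t - c / 2 / t) ^ 2) / t ^ 2) := by
  have hpow : (t ^ (2 : ℝ)) ^ (-(3 : ℝ) / 2) = (t ^ 3)⁻¹ := by
    rw [← rpow_mul ht.le, ← rpow_natCast, ← rpow_neg ht.le]
    norm_num
  have hexp : exp (-p * t ^ 2) * exp (-c ^ 2 / (4 * t ^ 2)) =
      exp (-(c * √p)) * exp (-(√p * t - c / 2 / t) ^ 2) := by
    rw [← exp_add, ← exp_add]
    congr 1
    rw [sub_sq, mul_pow, sq_sqrt hp.le]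
    field_simp
    ring
  rw [levyDensity, hpow, rpow_two, smul_eq_mul, show (2 : ℝ) - 1 = 1 by norm_num, rpow_one]
  calc _ = c / (2 * √π) * (exp (-p * t ^ 2) * exp (-c ^ 2 / (4 * t ^ 2))) * (t * (t ^ 3)⁻¹) := by
        ring
    _ = _ := by
        rw [hexp, show t * (t ^ 3)⁻¹ = 1 / t ^ 2 by field_simp]
        ring

theorem integrableOn_exp_mul_levyDensity (hc : 0 < c) (hp : 0 < p) :
    IntegrableOn (fun x => exp (-p * x) * levyDensity c x) (Ioi 0) := by
  rw [← integrableOn_Ioi_comp_rpow_iff' _ two_ne_zero]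
  refine IntegrableOn.congr_fun
    ((integrableOn_exp_neg_mul_sub_div_sq_div_sq (sqrt_pos.2 hp) (half_pos hc)).const_mul
      (c / (2 * √π) * exp (-(c * √p))))
    (fun t ht => (rpow_smul_exp_mul_levyDensity_rpow_two hp ht).symm) measurableSet_Ioi

theorem integral_exp_mul_levyDensity (hc : 0 < c) (hp : 0 < p) :
    ∫ x in Ioi 0, exp (-p * x) * levyDensity c x = exp (-(c * √p)) := by
  rw [← integral_comp_rpow_Ioi_of_pos two_pos, setIntegral_congr_fun measurableSet_Ioi
    (fun t ht => by rw [mul_smul, rpow_smul_exp_mul_levyDensity_rpow_two hp ht]),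
    integral_smul, integral_const_mul,
    integral_exp_neg_mul_sub_div_sq_div_sq (sqrt_pos.2 hp) (half_pos hc), smul_eq_mul]
  field_simp

theorem integral_norm_exp_mul_levyDensity (hc : 0 < c) (hp : 0 < p) :
    ∫ x in Ioi 0, ‖exp (-p * x) * levyDensity c x‖ = exp (-(c * √p)) := by
  rw [← integral_exp_mul_levyDensity hc hp]
  exact setIntegral_congr_fun measurableSet_Ioi fun x hx =>
    norm_of_nonneg (mul_nonneg (exp_pos _).le (levyDensity_nonneg hc.le hx))

end Levy

section Mixture

variable {b β₁ β₂ x₁ x₂ : ℝ}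

lemma rpow_mul_levyDensity_mul_levyDensity (hx₁ : 0 < x₁) (hx₂ : 0 < x₂) {s : ℝ} (hs : 0 < s) :
    s ^ (b - 1) * (levyDensity (β₁ * s) x₁ * levyDensity (β₂ * s) x₂) =
      β₁ * β₂ / (4 * π) * (x₁ * x₂) ^ (-(3 : ℝ) / 2) *
        (s ^ (b + 1) * exp (-((β₁ ^ 2 / x₁ + β₂ ^ 2 / x₂) / 4) * s ^ (2 : ℝ))) := by
  have hpow : s ^ (b + 1) = s ^ (b - 1) * s * s := by
    rw [← rpow_add_one hs.ne', ← rpow_add_one hs.ne']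
    ring_nf
  have hexp : exp (-(β₁ * s) ^ 2 / (4 * x₁)) * exp (-(β₂ * s) ^ 2 / (4 * x₂)) =
      exp (-((β₁ ^ 2 / x₁ + β₂ ^ 2 / x₂) / 4) * s ^ (2 : ℝ)) := by
    rw [← exp_add, rpow_two]
    congr 1
    field_simp
    ring
  rw [levyDensity, levyDensity, hpow, mul_rpow hx₁.le hx₂.le, ← hexp]
  field_simp
  rw [sq_sqrt pi_pos.le]
  ring

theorem integral_rpow_mul_levyDensity_mul_levyDensity (hb : -2 < b) (hβ₁ : 0 < β₁) (hβ₂ : 0 < β₂)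
    (hx₁ : 0 < x₁) (hx₂ : 0 < x₂) :
    ∫ s in Ioi 0, s ^ (b - 1) * (levyDensity (β₁ * s) x₁ * levyDensity (β₂ * s) x₂) =
      2 ^ (b - 1) / π * β₁ * β₂ * Gamma (b / 2 + 1) * (x₁ * x₂) ^ (-(3 : ℝ) / 2) *
        (β₁ ^ 2 / x₁ + β₂ ^ 2 / x₂) ^ (-b / 2 - 1) := by
  have hA : 0 < β₁ ^ 2 / x₁ + β₂ ^ 2 / x₂ := by positivity
  have h4 : (4 : ℝ) ^ (-b / 2 - 1) = (2 ^ (b - 1))⁻¹ / 8 := by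
    rw [show (4 : ℝ) = 2 ^ (2 : ℝ) by norm_num, ← rpow_mul zero_le_two, ← rpow_neg zero_le_two,
      show (8 : ℝ) = 2 ^ (3 : ℝ) by norm_num, ← rpow_sub two_pos]
    ring_nf
  rw [setIntegral_congr_fun measurableSet_Ioi
      (fun s hs => rpow_mul_levyDensity_mul_levyDensity hx₁ hx₂ hs), integral_const_mul,
    integral_rpow_mul_exp_neg_mul_rpow two_pos (by linarith) (by positivity),
    div_rpow hA.le zero_le_four, show -(b + 1 + 1) / 2 = -b / 2 - 1 by ring,
    show (b + 1 + 1) / 2 = b / 2 + 1 by ring, h4]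
  field_simp
  ring

end Mixture

theorem rpow_neg_eq_integral_rpow_mul_exp_div_Gamma {b q : ℝ} (hb : 0 < b) (hq : 0 < q) :
    q ^ (-b) = ∫ s in Ioi 0, s ^ (b - 1) * exp (-(q * s)) / Gamma b := by
  rw [integral_div, integral_rpow_mul_exp_neg_mul_Ioi hb hq, one_div, inv_rpow hq.le,
    ← rpow_neg hq.le]
  field_simp [(Gamma_pos_of_pos hb).ne']

theorem rpow_neg_eq_integral_integral_integral_levyDensity {β₁ β₂ b p₁ p₂ : ℝ}
    (hβ₁ : 0 < β₁) (hβ₂ : 0 < β₂) (hb : 0 < b) (hp₁ : 0 < p₁) (hp₂ : 0 < p₂) :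
    (β₁ * √p₁ + β₂ * √p₂) ^ (-b) = ∫ x₁ in Ioi 0, ∫ x₂ in Ioi 0, ∫ s in Ioi 0,
      s ^ (b - 1) / Gamma b * (exp (-p₁ * x₁) * levyDensity (β₁ * s) x₁ *
        (exp (-p₂ * x₂) * levyDensity (β₂ * s) x₂)) := by
  have hq : 0 < β₁ * √p₁ + β₂ * √p₂ := by positivity
  let w : ℝ → ℝ := fun s => s ^ (b - 1) / Gamma b
  let f : ℝ → ℝ → ℝ := fun s x => exp (-p₁ * x) * levyDensity (β₁ * s) x
  let g : ℝ → ℝ → ℝ := fun s x => exp (-p₂ * x) * levyDensity (β₂ * s) x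
  have hf : ∀ᵐ s ∂volume.restrict (Ioi 0), IntegrableOn (f s) (Ioi 0) :=
    (ae_restrict_mem measurableSet_Ioi).mono fun s hs =>
      integrableOn_exp_mul_levyDensity (mul_pos hβ₁ hs) hp₁
  have hg : ∀ᵐ s ∂volume.restrict (Ioi 0), IntegrableOn (g s) (Ioi 0) :=
    (ae_restrict_mem measurableSet_Ioi).mono fun s hs =>
      integrableOn_exp_mul_levyDensity (mul_pos hβ₂ hs) hp₂
  have hexp : ∀ s, exp (-(β₁ * s * √p₁)) * exp (-(β₂ * s * √p₂)) =
      exp (-((β₁ * √p₁ + β₂ * √p₂) * s)) := fun s => by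
    rw [← exp_add]
    congr 1
    ring
  have hwfg : ∀ s ∈ Ioi (0 : ℝ), w s * ((∫ x in Ioi 0, f s x) * ∫ y in Ioi 0, g s y) =
      s ^ (b - 1) * exp (-((β₁ * √p₁ + β₂ * √p₂) * s)) / Gamma b := fun s hs => by
    rw [integral_exp_mul_levyDensity (mul_pos hβ₁ hs) hp₁,
      integral_exp_mul_levyDensity (mul_pos hβ₂ hs) hp₂, hexp, div_mul_eq_mul_div]
  have hgamma := rpow_neg_eq_integral_rpow_mul_exp_div_Gamma hb hq
  have hint : IntegrableOn (fun s => ‖w s‖ * ((∫ x in Ioi 0, ‖f s x‖) * ∫ y in Ioi 0, ‖g s y‖))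
      (Ioi 0) := by
    refine IntegrableOn.congr_fun (Integrable.of_integral_ne_zero
      (f := fun s => s ^ (b - 1) * exp (-((β₁ * √p₁ + β₂ * √p₂) * s)) / Gamma b) ?_)
      (fun s hs => ?_) measurableSet_Ioi
    · rw [← hgamma]; positivity
    · have hs : 0 < s := hs
      rw [integral_norm_exp_mul_levyDensity (mul_pos hβ₁ hs) hp₁,
        integral_norm_exp_mul_levyDensity (mul_pos hβ₂ hs) hp₂, hexp,
        norm_of_nonneg (by positivity), div_mul_eq_mul_div]
  have hm : Measurable fun z : (ℝ × ℝ) × ℝ => w z.2 * (f z.2 z.1.1 * g z.2 z.1.2) := by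
    simp only [w, f, g, levyDensity]
    fun_prop
  rw [hgamma, ← setIntegral_congr_fun measurableSet_Ioi hwfg]
  exact (integral_integral_integral_mul_mul hm.aestronglyMeasurable hf hg hint).symm

/-- Two-dimensional Laplace transform representation of `(β₁√p₁ + β₂√p₂)^{-b}`. -/
theorem laplace_of_sqrt_power
    (β₁ β₂ b : ℝ) (hβ₁ : 0 < β₁) (hβ₂ : 0 < β₂) (hb : 0 < b)
    (p₁ p₂ : ℝ) (hp₁ : 0 < p₁) (hp₂ : 0 < p₂) :
    (β₁ * Real.sqrt p₁ + β₂ * Real.sqrt p₂) ^ (-b)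
      = ∫ x₁ in Ioi (0:ℝ), ∫ x₂ in Ioi (0:ℝ),
          Real.exp (-p₁ * x₁ - p₂ * x₂) *
            (2 ^ (b - 1) / Real.pi * β₁ * β₂ * (Real.Gamma (b / 2 + 1) / Real.Gamma b) *
              (x₁ * x₂) ^ (-(3:ℝ)/2) * (β₁ ^ 2 / x₁ + β₂ ^ 2 / x₂) ^ (-b / 2 - 1)) := by
  rw [rpow_neg_eq_integral_integral_integral_levyDensity hβ₁ hβ₂ hb hp₁ hp₂]
  refine setIntegral_congr_fun measurableSet_Ioi fun x₁ hx₁ =>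
    setIntegral_congr_fun measurableSet_Ioi fun x₂ hx₂ => ?_
  have hsplit : ∀ s : ℝ, s ^ (b - 1) / Gamma b * (exp (-p₁ * x₁) * levyDensity (β₁ * s) x₁ *
      (exp (-p₂ * x₂) * levyDensity (β₂ * s) x₂)) = exp (-p₁ * x₁ - p₂ * x₂) / Gamma b *
        (s ^ (b - 1) * (levyDensity (β₁ * s) x₁ * levyDensity (β₂ * s) x₂)) := fun s => by
    rw [show -p₁ * x₁ - p₂ * x₂ = -p₁ * x₁ + -p₂ * x₂ by ring, exp_add]
    ring
  rw [integral_congr_ae (.of_forall hsplit), integral_const_mul,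
    integral_rpow_mul_levyDensity_mul_levyDensity (by linarith) hβ₁ hβ₂ hx₁ hx₂]
  ring
end

section
/- Let f: [0,∞) → ℝ satisfy ∫_0^∞ e^{-As}|f(s)| ds < ∞ for every A > 0. Define G(s) = ∫_0^∞ e^{-st} √t f(√t) dt and H(x₁,x₂) = (1/(8π)) (x₁x₂)^{-3/2} G(1/(4x₁) + 1/(4x₂)). Then for all p₁, p₂ > 0, ∫_0^∞ e^{-s(√p₁+√p₂)} f(s) ds = ∫_{ℝ²₊} e^{-p₁x₁-p₂x₂} H(x₁,x₂) dx₁dx₂. -/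
open MeasureTheory Real Set

/-!
After the substitution `t = s²` in `G`, the kernel of `H` factorizes as
`L(s, x₁) L(s, x₂)` with the Lévy density `L(s, x) = s (4π)^{-1/2} x^{-3/2} e^{-s²/(4x)}`, whose
Laplace transform in `x` is `e^{-s√p}`. Two applications of Fubini (legitimate because `L ≥ 0` and
`e^{-As} f(s)` is integrable) integrate out `x₂` and then `x₁`.

The Laplace transform of `L`, i.e. `∫₀^∞ x^{-3/2} e^{-a²/x - b²x} dx = (√π/a) e^{-2ab}`, reduces
via `x = (a/b) y²` to the Cauchy–Schlömilch integral `∫₀^∞ y⁻² e^{-c (y - y⁻¹)²} dy = ½ √(π/c)`: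
the map `y ↦ y - y⁻¹` sends `(0, ∞)` onto `ℝ` with Jacobian `1 + y⁻²`, which gives the Gaussian
integral, and `y ↦ y⁻¹` exchanges the two halves.
-/

lemma strictMonoOn_sub_inv : StrictMonoOn (fun y : ℝ => y - y⁻¹) (Ioi 0) :=
  fun _ ha _ _ hab => sub_lt_sub hab (inv_strictAnti₀ ha hab)

lemma image_sub_inv_Ioi : (fun y : ℝ => y - y⁻¹) '' Ioi 0 = univ := by
  refine eq_univ_of_forall fun u => ?_
  set s := √(u ^ 2 + 4)
  have hs : s ^ 2 = u ^ 2 + 4 := sq_sqrt (by positivity)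
  have hus : |u| < s := by nlinarith [sqrt_nonneg (u ^ 2 + 4), abs_nonneg u, sq_abs u]
  have hy : 0 < (u + s) / 2 := by linarith [neg_abs_le u]
  refine ⟨(u + s) / 2, hy, ?_⟩
  have hinv : ((u + s) / 2)⁻¹ = (s - u) / 2 := inv_eq_of_mul_eq_one_right (by nlinarith)
  simp only [hinv]
  ring

lemma integral_one_add_inv_sq_mul_exp_neg_mul_sub_inv_sq (c : ℝ) :
    ∫ y in Ioi 0, (1 + (y ^ 2)⁻¹) * exp (-c * (y - y⁻¹) ^ 2) = √(π / c) := by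
  have hderiv : ∀ y ∈ Ioi (0 : ℝ),
      HasDerivWithinAt (fun y : ℝ => y - y⁻¹) (1 + (y ^ 2)⁻¹) (Ioi 0) y := fun y hy => by
    simpa using ((hasDerivAt_id' y).fun_sub (hasDerivAt_inv (ne_of_gt hy))).hasDerivWithinAt
  have := integral_image_eq_integral_abs_deriv_smul measurableSet_Ioi hderiv
    strictMonoOn_sub_inv.injOn (fun u => exp (-c * u ^ 2))
  rw [image_sub_inv_Ioi, setIntegral_univ, integral_gaussian] at this
  rw [this]
  refine setIntegral_congr_fun measurableSet_Ioi fun y _ => ?_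
  rw [smul_eq_mul, abs_of_pos (by positivity)]

lemma integral_inv_sq_mul_comp_inv_Ioi (g : ℝ → ℝ) :
    ∫ y in Ioi 0, (y ^ 2)⁻¹ * g y⁻¹ = ∫ y in Ioi 0, g y := by
  rw [← integral_comp_rpow_Ioi g (p := -1) (by norm_num)]
  refine setIntegral_congr_fun measurableSet_Ioi fun y hy => ?_
  rw [smul_eq_mul, rpow_neg_one, show (-1 : ℝ) - 1 = -2 by norm_num, rpow_neg (le_of_lt hy)]
  norm_num

lemma integral_inv_sq_mul_exp_neg_mul_sub_inv_sq {c : ℝ} (hc : 0 < c) :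
    ∫ y in Ioi 0, (y ^ 2)⁻¹ * exp (-c * (y - y⁻¹) ^ 2) = √(π / c) / 2 := by
  set E := fun y : ℝ => exp (-c * (y - y⁻¹) ^ 2)
  have hsum := integral_one_add_inv_sq_mul_exp_neg_mul_sub_inv_sq c
  have hint : IntegrableOn (fun y => (1 + (y ^ 2)⁻¹) * E y) (Ioi 0) :=
    Integrable.of_integral_ne_zero (by rw [hsum]; positivity)
  have hE : IntegrableOn E (Ioi 0) := by
    refine hint.mono' (by fun_prop) ((ae_restrict_mem measurableSet_Ioi).mono fun y _ => ?_)
    rw [norm_of_nonneg (exp_pos _).le]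
    exact le_mul_of_one_le_left (exp_pos _).le (by simp; positivity)
  have hE' : IntegrableOn (fun y => (y ^ 2)⁻¹ * E y) (Ioi 0) := by
    refine hint.mono' (by fun_prop) ((ae_restrict_mem measurableSet_Ioi).mono fun y _ => ?_)
    rw [norm_of_nonneg (by positivity)]
    exact mul_le_mul_of_nonneg_right (by linarith) (exp_pos _).le
  have hsymm : ∫ y in Ioi 0, (y ^ 2)⁻¹ * E y = ∫ y in Ioi 0, E y := by
    rw [← integral_inv_sq_mul_comp_inv_Ioi E]
    refine setIntegral_congr_fun measurableSet_Ioi fun y _ => ?_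
    simp only [E, inv_inv]
    ring_nf
  simp only [add_mul, one_mul] at hsum
  rw [integral_add hE hE', hsymm] at hsum
  rw [hsymm]
  linarith

lemma integral_comp_mul_sq_Ioi (g : ℝ → ℝ) {r : ℝ} (hr : 0 < r) :
    ∫ y in Ioi 0, 2 * r * y * g (r * y ^ 2) = ∫ x in Ioi 0, g x := by
  have himage : (fun y => r * y ^ 2) '' Ioi 0 = Ioi 0 := by
    ext x
    refine ⟨?_, fun hx => ?_⟩
    · rintro ⟨y, hy, rfl⟩
      exact mul_pos hr (pow_pos hy 2)
    · have hxr : 0 < x / r := div_pos hx hr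
      refine ⟨√(x / r), sqrt_pos.2 hxr, ?_⟩
      simp only [sq_sqrt hxr.le]
      field_simp
  have hmono : StrictMonoOn (fun y => r * y ^ 2) (Ioi 0) := fun _ ha _ _ hab =>
    mul_lt_mul_of_pos_left (pow_lt_pow_left₀ hab (le_of_lt ha) two_ne_zero) hr
  have hderiv : ∀ y ∈ Ioi (0 : ℝ), HasDerivWithinAt (fun y => r * y ^ 2) (2 * r * y) (Ioi 0) y :=
    fun y _ => by
      simpa [mul_comm, mul_left_comm] using ((hasDerivAt_pow 2 y).const_mul r).hasDerivWithinAt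
  have := integral_image_eq_integral_abs_deriv_smul measurableSet_Ioi hderiv hmono.injOn g
  rw [himage] at this
  rw [this]
  refine setIntegral_congr_fun measurableSet_Ioi fun y hy => ?_
  rw [smul_eq_mul, abs_of_pos (by have := mem_Ioi.1 hy; positivity)]

lemma sq_rpow_neg_three_halves {t : ℝ} (ht : 0 ≤ t) : (t ^ 2) ^ (-(3 : ℝ) / 2) = (t ^ 3)⁻¹ := by
  rw [← rpow_natCast, ← rpow_mul ht, show ((2 : ℕ) : ℝ) * (-3 / 2) = -(3 : ℕ) by norm_num,
    rpow_neg ht, rpow_natCast]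

lemma integral_rpow_neg_three_halves_mul_exp {a b : ℝ} (ha : 0 < a) (hb : 0 < b) :
    ∫ x in Ioi 0, x ^ (-(3 : ℝ) / 2) * exp (-(a ^ 2 / x) - b ^ 2 * x)
      = √π / a * exp (-(2 * a * b)) := by
  set k := √a / √b
  have hk : 0 < k := by positivity
  have hk2 : k ^ 2 = a / b := by rw [div_pow, sq_sqrt ha.le, sq_sqrt hb.le]
  rw [← integral_comp_mul_sq_Ioi _ (pow_pos hk 2)]
  have hpoint : ∀ y ∈ Ioi (0 : ℝ), 2 * k ^ 2 * y * ((k ^ 2 * y ^ 2) ^ (-(3 : ℝ) / 2)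
        * exp (-(a ^ 2 / (k ^ 2 * y ^ 2)) - b ^ 2 * (k ^ 2 * y ^ 2)))
      = 2 / k * exp (-(2 * a * b)) * ((y ^ 2)⁻¹ * exp (-(a * b) * (y - y⁻¹) ^ 2)) := by
    intro y (hy : 0 < y)
    have hexp : -(a ^ 2 / (k ^ 2 * y ^ 2)) - b ^ 2 * (k ^ 2 * y ^ 2)
        = -(2 * a * b) + -(a * b) * (y - y⁻¹) ^ 2 := by
      rw [hk2]
      field_simp
      ring
    rw [hexp, exp_add, ← mul_pow, sq_rpow_neg_three_halves (by positivity)]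
    field_simp
  rw [setIntegral_congr_fun measurableSet_Ioi hpoint, integral_const_mul,
    integral_inv_sq_mul_exp_neg_mul_sub_inv_sq (by positivity), sqrt_div pi_nonneg,
    sqrt_mul ha.le]
  have hka : k * √a * √b = a := by
    simp only [k]
    field_simp
    exact sq_sqrt ha.le
  field_simp
  linarith

noncomputable def levyKernel (s x : ℝ) : ℝ :=
  s / (2 * √π) * x ^ (-(3 : ℝ) / 2) * exp (-(s ^ 2 / (4 * x)))

lemma levyKernel_nonneg {s x : ℝ} (hs : 0 ≤ s) (hx : 0 ≤ x) : 0 ≤ levyKernel s x := by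
  unfold levyKernel
  positivity

lemma integral_exp_neg_mul_levyKernel {p s : ℝ} (hp : 0 < p) (hs : 0 < s) :
    ∫ x in Ioi 0, exp (-p * x) * levyKernel s x = exp (-√p * s) := by
  have h := integral_rpow_neg_three_halves_mul_exp (half_pos hs) (sqrt_pos.2 hp)
  rw [sq_sqrt hp.le] at h
  calc ∫ x in Ioi 0, exp (-p * x) * levyKernel s x
      = ∫ x in Ioi 0,
          s / (2 * √π) * (x ^ (-(3 : ℝ) / 2) * exp (-((s / 2) ^ 2 / x) - p * x)) := by
        refine setIntegral_congr_fun measurableSet_Ioi fun x _ => ?_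
        rw [levyKernel, show -((s / 2) ^ 2 / x) - p * x = -p * x + -(s ^ 2 / (4 * x)) by ring,
          exp_add]
        ring
    _ = exp (-√p * s) := by
        rw [integral_const_mul, h]
        field_simp

lemma integrableOn_exp_neg_mul_levyKernel {p s : ℝ} (hp : 0 < p) (hs : 0 < s) :
    IntegrableOn (fun x => exp (-p * x) * levyKernel s x) (Ioi 0) :=
  Integrable.of_integral_ne_zero (by rw [integral_exp_neg_mul_levyKernel hp hs]; positivity)

lemma abs_mul_exp_neg_sq_div_le {c : ℝ} (hc : 0 < c) (s : ℝ) :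
    |s| * exp (-(s ^ 2 / c)) ≤ √c := by
  have hsc := sqrt_pos.2 hc
  have hlin : |s| ≤ √c * (1 + s ^ 2 / c) := by
    have hcs : √c * (1 + s ^ 2 / c) = (c + s ^ 2) / √c := by
      field_simp
      rw [sq_sqrt hc.le]
    rw [hcs, le_div_iff₀ hsc]
    nlinarith [sq_nonneg (|s| - √c), sq_abs s, sq_sqrt hc.le, abs_nonneg s]
  calc |s| * exp (-(s ^ 2 / c)) ≤ √c * (1 + s ^ 2 / c) * exp (-(s ^ 2 / c)) := by gcongr
    _ ≤ √c * exp (s ^ 2 / c) * exp (-(s ^ 2 / c)) := by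
        gcongr
        linarith [add_one_le_exp (s ^ 2 / c)]
    _ = √c := by rw [mul_assoc, ← exp_add, add_neg_cancel, exp_zero, mul_one]

lemma integrableOn_levyKernel_mul {x : ℝ} (hx : 0 < x) {h : ℝ → ℝ}
    (hh : IntegrableOn h (Ioi 0)) : IntegrableOn (fun s => levyKernel s x * h s) (Ioi 0) := by
  refine hh.bdd_mul (c := √(4 * x) / (2 * √π) * x ^ (-(3 : ℝ) / 2))
    (by unfold levyKernel; fun_prop) (ae_of_all _ fun s => ?_)
  rw [levyKernel, norm_mul, norm_mul, norm_div, norm_of_nonneg (exp_pos _).le,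
    norm_of_nonneg (by positivity : 0 ≤ 2 * √π),
    norm_of_nonneg (by positivity : 0 ≤ x ^ (-(3 : ℝ) / 2)), Real.norm_eq_abs]
  have := abs_mul_exp_neg_sq_div_le (by positivity : 0 < 4 * x) s
  calc |s| / (2 * √π) * x ^ (-(3 : ℝ) / 2) * exp (-(s ^ 2 / (4 * x)))
      = |s| * exp (-(s ^ 2 / (4 * x))) / (2 * √π) * x ^ (-(3 : ℝ) / 2) := by ring
    _ ≤ √(4 * x) / (2 * √π) * x ^ (-(3 : ℝ) / 2) := by gcongr

lemma integral_integral_exp_neg_mul_levyKernel_mul {p : ℝ} (hp : 0 < p) {g : ℝ → ℝ}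
    (hg : Measurable g) (hg_int : IntegrableOn (fun s => exp (-√p * s) * g s) (Ioi 0)) :
    ∫ x in Ioi 0, ∫ s in Ioi 0, exp (-p * x) * levyKernel s x * g s
      = ∫ s in Ioi 0, exp (-√p * s) * g s := by
  have hF : Integrable (Function.uncurry fun x s => exp (-p * x) * levyKernel s x * g s)
      ((volume.restrict (Ioi 0)).prod (volume.restrict (Ioi 0))) := by
    have hmeas : Measurable (Function.uncurry fun x s => exp (-p * x) * levyKernel s x * g s) :=
      by unfold levyKernel; fun_prop
    rw [integrable_prod_iff' hmeas.aestronglyMeasurable]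
    refine ⟨(ae_restrict_mem measurableSet_Ioi).mono fun s hs =>
      (integrableOn_exp_neg_mul_levyKernel hp hs).mul_const (g s), hg_int.norm.congr ?_⟩
    filter_upwards [ae_restrict_mem measurableSet_Ioi] with s hs
    calc ‖exp (-√p * s) * g s‖ = (∫ x in Ioi 0, exp (-p * x) * levyKernel s x) * |g s| := by
          rw [integral_exp_neg_mul_levyKernel hp hs, norm_mul, norm_of_nonneg (exp_pos _).le,
            Real.norm_eq_abs]
      _ = ∫ x in Ioi 0, ‖exp (-p * x) * levyKernel s x * g s‖ := by
          rw [← integral_mul_const]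
          refine setIntegral_congr_fun measurableSet_Ioi fun x hx => ?_
          rw [norm_mul, norm_of_nonneg (mul_nonneg (exp_pos _).le
            (levyKernel_nonneg (le_of_lt hs) (le_of_lt hx))), Real.norm_eq_abs]
  rw [integral_integral_swap hF]
  refine setIntegral_congr_fun measurableSet_Ioi fun s hs => ?_
  rw [integral_mul_const, integral_exp_neg_mul_levyKernel hp hs]

lemma levyKernel_mul_levyKernel (s : ℝ) {x₁ x₂ : ℝ} (hx₁ : 0 ≤ x₁) (hx₂ : 0 ≤ x₂) :
    levyKernel s x₁ * levyKernel s x₂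
      = s ^ 2 / (4 * π) * (x₁ * x₂) ^ (-(3 : ℝ) / 2)
        * exp (-(1 / (4 * x₁) + 1 / (4 * x₂)) * s ^ 2) := by
  rw [levyKernel, levyKernel, mul_rpow hx₁ hx₂,
    show -(1 / (4 * x₁) + 1 / (4 * x₂)) * s ^ 2 = -(s ^ 2 / (4 * x₁)) + -(s ^ 2 / (4 * x₂)) by
      ring, exp_add]
  field_simp
  rw [sq_sqrt pi_nonneg]
  ring

lemma exp_neg_mul_kernel_eq_integral_levyKernel (f : ℝ → ℝ) {p₁ p₂ x₁ x₂ : ℝ} (hx₁ : 0 < x₁)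
    (hx₂ : 0 < x₂) :
    exp (-p₁ * x₁ - p₂ * x₂) * (1 / (8 * π) * (x₁ * x₂) ^ (-(3 : ℝ) / 2) *
      ∫ t in Ioi 0, exp (-(1 / (4 * x₁) + 1 / (4 * x₂)) * t) * √t * f √t)
    = ∫ s in Ioi 0,
        exp (-p₂ * x₂) * levyKernel s x₂ * (exp (-p₁ * x₁) * levyKernel s x₁ * f s) := by
  rw [← integral_comp_mul_sq_Ioi _ one_pos, ← integral_const_mul, ← integral_const_mul]
  refine setIntegral_congr_fun measurableSet_Ioi fun s hs => ?_
  simp only [one_mul, sqrt_sq (le_of_lt (mem_Ioi.1 hs))]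
  rw [show -p₁ * x₁ - p₂ * x₂ = -p₁ * x₁ + -p₂ * x₂ by ring, exp_add]
  linear_combination (-(exp (-p₁ * x₁) * exp (-p₂ * x₂) * f s)) *
    levyKernel_mul_levyKernel s hx₁.le hx₂.le

/-- Reduction of the one-dimensional Laplace-type integral `∫ e^{-s(√p₁+√p₂)} f(s) ds`
to a two-dimensional Laplace transform. -/
theorem laplace_sqrt_reduction
    (f : ℝ → ℝ) (hf_meas : Measurable f)
    (hf_int : ∀ A > (0:ℝ), IntegrableOn (fun s => Real.exp (-A * s) * |f s|) (Ioi 0))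
    (G : ℝ → ℝ)
    (hG : G = fun s => ∫ t in Ioi (0:ℝ), Real.exp (-s * t) * Real.sqrt t * f (Real.sqrt t))
    (H : ℝ → ℝ → ℝ)
    (hH : H = fun x₁ x₂ =>
      1 / (8 * Real.pi) * (x₁ * x₂) ^ (-(3:ℝ)/2) * G (1 / (4 * x₁) + 1 / (4 * x₂)))
    (p₁ p₂ : ℝ) (hp₁ : 0 < p₁) (hp₂ : 0 < p₂) :
    ∫ s in Ioi (0:ℝ), Real.exp (-s * (Real.sqrt p₁ + Real.sqrt p₂)) * f s
      = ∫ x₁ in Ioi (0:ℝ), ∫ x₂ in Ioi (0:ℝ),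
          Real.exp (-p₁ * x₁ - p₂ * x₂) * H x₁ x₂ := by
  subst hH hG
  have hLaplace : ∀ A > 0, IntegrableOn (fun s => exp (-A * s) * f s) (Ioi 0) := fun A hA =>
    (integrable_norm_iff (by fun_prop)).1 <| (hf_int A hA).congr_fun
      (fun s _ => by rw [norm_mul, norm_of_nonneg (exp_pos _).le, Real.norm_eq_abs])
      measurableSet_Ioi
  have hq₂ := hLaplace _ (sqrt_pos.2 hp₂)
  have hq₁₂ : IntegrableOn (fun s => exp (-√p₁ * s) * (exp (-√p₂ * s) * f s)) (Ioi 0) :=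
    (hLaplace _ (add_pos (sqrt_pos.2 hp₁) (sqrt_pos.2 hp₂))).congr_fun
      (fun s _ => by rw [← mul_assoc, ← exp_add]; ring_nf) measurableSet_Ioi
  symm
  calc _ = ∫ x₁ in Ioi 0, ∫ x₂ in Ioi 0, ∫ s in Ioi 0,
          exp (-p₂ * x₂) * levyKernel s x₂ * (exp (-p₁ * x₁) * levyKernel s x₁ * f s) :=
        setIntegral_congr_fun measurableSet_Ioi fun x₁ hx₁ => setIntegral_congr_fun
          measurableSet_Ioi fun x₂ hx₂ => exp_neg_mul_kernel_eq_integral_levyKernel f hx₁ hx₂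
    _ = ∫ x₁ in Ioi 0, ∫ s in Ioi 0,
          exp (-p₁ * x₁) * levyKernel s x₁ * (exp (-√p₂ * s) * f s) := by
        refine setIntegral_congr_fun measurableSet_Ioi fun x₁ hx₁ => ?_
        rw [integral_integral_exp_neg_mul_levyKernel_mul hp₂ (by unfold levyKernel; fun_prop)
          (IntegrableOn.congr_fun ((integrableOn_levyKernel_mul hx₁ hq₂).const_mul
            (exp (-p₁ * x₁))) (fun s _ => by ring) measurableSet_Ioi)]
        congr 1 with s
        ring
    _ = ∫ s in Ioi 0, exp (-√p₁ * s) * (exp (-√p₂ * s) * f s) :=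
        integral_integral_exp_neg_mul_levyKernel_mul hp₁ (by fun_prop) hq₁₂
    _ = _ := by
        congr 1 with s
        rw [← mul_assoc, ← exp_add]
        ring_nf
end

section
/- With r ∈ [-1,0), h and φ as above built from a continuous f of sub-exponential growth, the function Π(p,p₀) = ∫_{ℝⁿ₊}(p₀ - h(p∘x))₊ φ(x)dx satisfies Π(p,+0) = 0, ∂Π/∂p₀(p,+0) = 0 for all p > 0, and positive homogeneity Π(p₁,…,pₙ,p₀) = p₀ Π(p₁/p₀,…,pₙ/p₀,1) for all strictly positive arguments. -/
/-!
Since `h(p∘x) ≥ pᵢ xᵢ` for every `i`, the integrand of `Π(p, ·)` restricted to prices `≤ c` is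
supported in the box `pᵢ xᵢ ≤ c`. There the sub-exponential growth of `f` bounds the Laplace-type
integral in `φ`, so `|φ x| ≤ K ∏ xᵢ^(-r-1)`, and integrating this majorant over the box shows that
`Π(p, ·)` is Lipschitz on `(-∞, c]` with constant `K ∏ (c/pᵢ)^(-r)/(-r) = O(c^(-n r))`. As `Π(p, 0) = 0`
and this constant vanishes as `c → 0`, both `Π(p, p₀)` and `∂Π/∂p₀` tend to `0`. Homogeneity is the
identity `h((p/p₀)∘x) = h(p∘x)/p₀` under the integral.
-/

open MeasureTheory Real Set Filter Topology

section CES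

variable {ι : Type*} [Fintype ι]

noncomputable def cesCost (r : ℝ) (p x : ι → ℝ) : ℝ := (∑ i, p i ^ (-r) * x i ^ (-r)) ^ (-1 / r)

variable {r : ℝ} {p x : ι → ℝ}

lemma cesCost_nonneg (hp : 0 ≤ p) (hx : 0 ≤ x) : 0 ≤ cesCost r p x :=
  rpow_nonneg (Finset.sum_nonneg fun i _ =>
    mul_nonneg (rpow_nonneg (hp i) _) (rpow_nonneg (hx i) _)) _

lemma mul_le_cesCost (hr : r < 0) (hp : 0 ≤ p) (hx : 0 ≤ x) (i : ι) :
    p i * x i ≤ cesCost r p x := by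
  have hr0 : r ≠ 0 := hr.ne
  have hpx : 0 ≤ p i * x i := mul_nonneg (hp i) (hx i)
  have hterm : (p i * x i) ^ (-r) ≤ ∑ j, p j ^ (-r) * x j ^ (-r) := by
    rw [mul_rpow (hp i) (hx i)]
    exact Finset.single_le_sum (f := fun j => p j ^ (-r) * x j ^ (-r))
      (fun j _ => mul_nonneg (rpow_nonneg (hp j) _) (rpow_nonneg (hx j) _)) (Finset.mem_univ i)
  calc p i * x i = ((p i * x i) ^ (-r)) ^ (-1 / r) := by
        rw [← rpow_mul hpx, show -r * (-1 / r) = 1 by field_simp, rpow_one]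
    _ ≤ cesCost r p x :=
        rpow_le_rpow (rpow_nonneg hpx _) hterm (div_pos_of_neg_of_neg neg_one_lt_zero hr).le

lemma cesCost_div (hr : r ≠ 0) (hp : 0 ≤ p) (hx : 0 ≤ x) {c : ℝ} (hc : 0 < c) :
    cesCost r (fun i => p i / c) x = c⁻¹ * cesCost r p x := by
  have hS : 0 ≤ ∑ i, p i ^ (-r) * x i ^ (-r) :=
    Finset.sum_nonneg fun i _ => mul_nonneg (rpow_nonneg (hp i) _) (rpow_nonneg (hx i) _)
  have hterm : ∀ i, (p i / c) ^ (-r) * x i ^ (-r) = c ^ r * (p i ^ (-r) * x i ^ (-r)) :=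
    fun i => by
      rw [div_rpow (hp i) hc.le, rpow_neg hc.le, div_inv_eq_mul]; ring
  unfold cesCost
  simp_rw [hterm, ← Finset.mul_sum]
  rw [mul_rpow (rpow_nonneg hc.le _) hS, ← rpow_mul hc.le, show r * (-1 / r) = -1 by field_simp,
    rpow_neg_one]

lemma measurable_cesCost : Measurable (cesCost r p) := by
  unfold cesCost; fun_prop

noncomputable def profit (r : ℝ) (φ : (ι → ℝ) → ℝ) (p : ι → ℝ) (p₀ : ℝ) : ℝ :=
  ∫ x in Ici 0, max (p₀ - cesCost r p x) 0 * φ x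

variable {φ : (ι → ℝ) → ℝ}

lemma profit_of_nonpos (hp : 0 ≤ p) {p₀ : ℝ} (hp₀ : p₀ ≤ 0) : profit r φ p p₀ = 0 := by
  refine (setIntegral_congr_fun measurableSet_Ici fun x hx => ?_).trans (integral_zero _ _)
  rw [max_eq_right (by linarith [cesCost_nonneg (r := r) hp (mem_Ici.1 hx)]), zero_mul]

lemma profit_eq_mul_profit_div (hr : r ≠ 0) (hp : 0 ≤ p) {p₀ : ℝ} (hp₀ : 0 < p₀) :
    profit r φ p p₀ = p₀ * profit r φ (fun i => p i / p₀) 1 := by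
  rw [profit, profit, ← integral_const_mul]
  refine setIntegral_congr_fun measurableSet_Ici fun x hx => ?_
  rw [cesCost_div hr hp hx hp₀, ← mul_assoc, mul_max_of_nonneg _ _ hp₀.le, mul_zero, mul_sub,
    mul_one, mul_inv_cancel_left₀ hp₀.ne']

end CES

section Majorant

lemma integrable_indicator_Icc_rpow {s : ℝ} (hs : -1 < s) (u : ℝ) :
    Integrable ((Icc 0 u).indicator (· ^ s)) := by
  refine IntegrableOn.integrable_indicator ?_ measurableSet_Icc
  rw [integrableOn_Icc_iff_integrableOn_Ioc]
  exact (intervalIntegral.intervalIntegrable_rpow' hs (a := 0) (b := u)).1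

lemma integral_indicator_Icc_rpow {s u : ℝ} (hs : -1 < s) (hu : 0 ≤ u) :
    ∫ t, (Icc 0 u).indicator (· ^ s) t = u ^ (s + 1) / (s + 1) := by
  rw [integral_indicator measurableSet_Icc, integral_Icc_eq_integral_Ioc,
    ← intervalIntegral.integral_of_le hu, integral_rpow (Or.inl hs),
    zero_rpow (by linarith), sub_zero]

variable {ι : Type*} [Fintype ι] {s : ℝ}

lemma integrable_prod_indicator_Icc_rpow (hs : -1 < s) (u : ι → ℝ) :
    Integrable fun x : ι → ℝ => ∏ i, (Icc 0 (u i)).indicator (· ^ s) (x i) :=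
  Integrable.fintype_prod fun i => integrable_indicator_Icc_rpow hs (u i)

lemma integral_prod_indicator_Icc_rpow (hs : -1 < s) {u : ι → ℝ} (hu : 0 ≤ u) :
    ∫ x : ι → ℝ, ∏ i, (Icc 0 (u i)).indicator (· ^ s) (x i) = ∏ i, u i ^ (s + 1) / (s + 1) := by
  rw [volume_pi, integral_fintype_prod_eq_prod (f := fun i => (Icc 0 (u i)).indicator (· ^ s))]
  exact Finset.prod_congr rfl fun i _ => integral_indicator_Icc_rpow hs (hu i)

end Majorant

section ProfitBounds

variable {ι : Type*} [Fintype ι] {r : ℝ} {p : ι → ℝ} {φ : (ι → ℝ) → ℝ}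

lemma abs_profit_integrand_sub_le (hr : r < 0) (hp : ∀ i, 0 < p i) {K R c a b : ℝ} (hK : 0 ≤ K)
    (hφ : ∀ x, 0 ≤ x → (∀ i, x i ≤ R) → |φ x| ≤ K * ∏ i, x i ^ (-r - 1))
    (hcR : ∀ i, c ≤ p i * R) (ha : a ≤ c) (hb : b ≤ c) {x : ι → ℝ} (hx : 0 ≤ x) :
    |max (a - cesCost r p x) 0 * φ x - max (b - cesCost r p x) 0 * φ x| ≤
      |a - b| * (K * ∏ i, (Icc 0 (c / p i)).indicator (· ^ (-r - 1)) (x i)) := by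
  rw [← sub_mul, abs_mul]
  by_cases hbox : ∀ i, p i * x i ≤ c
  · have hψx : ∏ i, (Icc 0 (c / p i)).indicator (· ^ (-r - 1)) (x i) = ∏ i, x i ^ (-r - 1) :=
      Finset.prod_congr rfl fun i _ =>
        indicator_of_mem (mem_Icc.2 ⟨hx i, (le_div_iff₀' (hp i)).2 (hbox i)⟩) _
    rw [hψx]
    refine mul_le_mul ((abs_max_sub_max_le_abs _ _ _).trans_eq (congrArg abs (by ring)))
      (hφ x hx fun i => le_of_mul_le_mul_left ((hbox i).trans (hcR i)) (hp i))
      (abs_nonneg _) (abs_nonneg _)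
  · push Not at hbox
    obtain ⟨i, hi⟩ := hbox
    have := mul_le_cesCost hr (fun j => (hp j).le) hx i
    rw [max_eq_right (by linarith), max_eq_right (by linarith), sub_zero, abs_zero, zero_mul]
    exact mul_nonneg (abs_nonneg _) (mul_nonneg hK (Finset.prod_nonneg fun j _ =>
      indicator_nonneg (fun t ht => rpow_nonneg ht.1 _) _))

lemma abs_profit_sub_le (hr : r < 0) (hp : ∀ i, 0 < p i)
    (hφm : AEStronglyMeasurable φ (volume.restrict (Ici 0))) {K R c a b : ℝ} (hK : 0 ≤ K)
    (hφ : ∀ x, 0 ≤ x → (∀ i, x i ≤ R) → |φ x| ≤ K * ∏ i, x i ^ (-r - 1))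
    (hc : 0 ≤ c) (hcR : ∀ i, c ≤ p i * R) (ha : a ≤ c) (hb : b ≤ c) :
    |profit r φ p a - profit r φ p b| ≤ K * (∏ i, (c / p i) ^ (-r) / (-r)) * |a - b| := by
  have hs : -1 < -r - 1 := by linarith
  set ψ := fun x : ι → ℝ => ∏ i, (Icc 0 (c / p i)).indicator (· ^ (-r - 1)) (x i)
  have hψ : Integrable ψ := integrable_prod_indicator_Icc_rpow hs _
  have hbound : ∀ a ≤ c, ∀ b ≤ c, ∀ᵐ x ∂volume.restrict (Ici 0),
      ‖max (a - cesCost r p x) 0 * φ x - max (b - cesCost r p x) 0 * φ x‖ ≤ |a - b| * (K * ψ x) :=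
    fun a ha b hb => (ae_restrict_mem measurableSet_Ici).mono fun x hx =>
      abs_profit_integrand_sub_le hr hp hK hφ hcR ha hb hx
  have hint : ∀ a ≤ c, IntegrableOn (fun x => max (a - cesCost r p x) 0 * φ x) (Ici 0) := by
    intro a ha
    refine Integrable.mono' ((hψ.const_mul K).const_mul |a|).integrableOn
      ((((measurable_const.sub measurable_cesCost).max measurable_const).aestronglyMeasurable).mul
        hφm) ?_
    filter_upwards [hbound a ha 0 hc, ae_restrict_mem measurableSet_Ici] with x hx hx0
    have hcost : 0 - cesCost r p x ≤ 0 := by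
      linarith [cesCost_nonneg (r := r) (fun j => (hp j).le) hx0]
    rwa [max_eq_right hcost, zero_mul, sub_zero, sub_zero] at hx
  calc |profit r φ p a - profit r φ p b|
      = ‖∫ x in Ici 0, (max (a - cesCost r p x) 0 * φ x - max (b - cesCost r p x) 0 * φ x)‖ := by
        rw [profit, profit, integral_sub (hint a ha) (hint b hb), norm_eq_abs]
    _ ≤ ∫ x in Ici 0, |a - b| * (K * ψ x) :=
        norm_integral_le_of_norm_le ((hψ.const_mul K).const_mul _).integrableOn (hbound a ha b hb)
    _ ≤ ∫ x, |a - b| * (K * ψ x) :=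
        setIntegral_le_integral ((hψ.const_mul K).const_mul _) (ae_of_all _ fun x =>
          mul_nonneg (abs_nonneg _) (mul_nonneg hK (Finset.prod_nonneg fun j _ =>
            indicator_nonneg (fun t ht => rpow_nonneg ht.1 _) _)))
    _ = K * (∏ i, (c / p i) ^ (-r) / (-r)) * |a - b| := by
        rw [integral_const_mul, integral_const_mul,
          integral_prod_indicator_Icc_rpow hs fun i => div_nonneg hc (hp i).le]
        rw [sub_add_cancel, mul_comm]

lemma exists_abs_profit_sub_le (hr : r < 0) (hp : ∀ i, 0 < p i)
    (hφm : AEStronglyMeasurable φ (volume.restrict (Ici 0)))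
    (hφ : ∀ R, ∃ K, 0 ≤ K ∧ ∀ x, 0 ≤ x → (∀ i, x i ≤ R) → |φ x| ≤ K * ∏ i, x i ^ (-r - 1)) :
    ∃ K, 0 ≤ K ∧ ∀ c a b, 0 ≤ c → c ≤ 1 → a ≤ c → b ≤ c →
      |profit r φ p a - profit r φ p b| ≤ K * (∏ i, (c / p i) ^ (-r) / (-r)) * |a - b| := by
  obtain ⟨R, hR⟩ := (eventually_all.2 fun i =>
    (tendsto_id.const_mul_atTop (hp i)).eventually_ge_atTop 1).exists
  obtain ⟨K, hK, hφK⟩ := hφ R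
  exact ⟨K, hK, fun c a b hc hc1 ha hb =>
    abs_profit_sub_le hr hp hφm hK hφK hc (fun i => hc1.trans (hR i)) ha hb⟩

lemma tendsto_profit_nhdsGT_zero (hr : r < 0) (hp : ∀ i, 0 < p i)
    (hφm : AEStronglyMeasurable φ (volume.restrict (Ici 0)))
    (hφ : ∀ R, ∃ K, 0 ≤ K ∧ ∀ x, 0 ≤ x → (∀ i, x i ≤ R) → |φ x| ≤ K * ∏ i, x i ^ (-r - 1)) :
    Tendsto (profit r φ p) (𝓝[>] 0) (𝓝 0) := by
  obtain ⟨K, -, hK⟩ := exists_abs_profit_sub_le hr hp hφm hφ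
  have hlim : Tendsto (fun a => K * (∏ i, (1 / p i) ^ (-r) / (-r)) * |a|) (𝓝[>] 0) (𝓝 0) :=
    ((continuous_const.mul continuous_abs).tendsto' 0 0 (by simp)).mono_left nhdsWithin_le_nhds
  refine squeeze_zero_norm' ?_ hlim
  filter_upwards [Ioc_mem_nhdsGT zero_lt_one] with a ha
  simpa [profit_of_nonpos (fun i => (hp i).le) le_rfl] using
    hK 1 a 0 zero_le_one le_rfl ha.2 zero_le_one

lemma tendsto_deriv_profit_nhdsGT_zero [Nonempty ι] (hr : r < 0) (hp : ∀ i, 0 < p i)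
    (hφm : AEStronglyMeasurable φ (volume.restrict (Ici 0)))
    (hφ : ∀ R, ∃ K, 0 ≤ K ∧ ∀ x, 0 ≤ x → (∀ i, x i ≤ R) → |φ x| ≤ K * ∏ i, x i ^ (-r - 1)) :
    Tendsto (deriv (profit r φ p)) (𝓝[>] 0) (𝓝 0) := by
  obtain ⟨K, hK0, hK⟩ := exists_abs_profit_sub_le hr hp hφm hφ
  set L : ℝ → ℝ := fun a => K * ∏ i, (2 * a / p i) ^ (-r) / (-r)
  have hL : Tendsto L (𝓝[>] 0) (𝓝 0) := by
    have hcont : Continuous L := continuous_const.mul (continuous_finsetProd _ fun i _ =>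
      ((continuous_const.mul continuous_id).div_const _ |>.rpow_const
        fun _ => Or.inr (neg_nonneg.2 hr.le)).div_const _)
    refine (hcont.tendsto' 0 0 ?_).mono_left nhdsWithin_le_nhds
    simp [L, zero_rpow (neg_ne_zero.2 hr.ne)]
  refine squeeze_zero_norm' ?_ hL
  filter_upwards [Ioo_mem_nhdsGT (by norm_num : (0:ℝ) < 1 / 2)] with a ⟨ha0, ha1⟩
  refine norm_deriv_le_of_lip' (mul_nonneg hK0 (Finset.prod_nonneg fun i _ =>
    div_nonneg (rpow_nonneg (div_nonneg (by linarith) (hp i).le) _) (neg_nonneg.2 hr.le))) ?_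
  filter_upwards [Iio_mem_nhds (by linarith : a < 2 * a)] with y hy
  exact hK (2 * a) y a (by linarith) (by linarith) hy.le (by linarith)

end ProfitBounds

lemma exists_abs_integral_pow_mul_exp_neg_le {ι : Type*} [Fintype ι] {f : (ι → ℝ) → ℝ}
    (hf : ∀ A > (0:ℝ), ∃ C > (0:ℝ), ∀ y : ι → ℝ, 0 ≤ y → |f y| ≤ C * exp (A * ‖y‖))
    (k : ℕ) (B : ℝ) :
    ∃ M, 0 ≤ M ∧ ∀ y : ι → ℝ, 0 ≤ y → ‖y‖ ≤ B →
      |∫ t in Ioi 0, t ^ k * exp (-t) * f (fun i => t * y i)| ≤ M := by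
  obtain ⟨C, hC, hCf⟩ := hf (2 * (|B| + 1))⁻¹ (by positivity)
  have hint : IntegrableOn (fun t : ℝ => C * (t ^ k * exp (-(1 / 2) * t))) (Ioi 0) := by
    have := integrableOn_rpow_mul_exp_neg_mul_rpow (s := k) (p := 1) (b := 1 / 2)
      (by linarith [k.cast_nonneg (α := ℝ)]) one_pos (by norm_num)
    exact (this.congr_fun (fun t _ => by simp [rpow_natCast]) measurableSet_Ioi).const_mul C
  refine ⟨∫ t in Ioi 0, C * (t ^ k * exp (-(1 / 2) * t)),
    setIntegral_nonneg measurableSet_Ioi fun t (ht : 0 < t) => by positivity,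
    fun y hy hyB => ?_⟩
  rw [← norm_eq_abs]
  refine norm_integral_le_of_norm_le hint ?_
  filter_upwards [ae_restrict_mem measurableSet_Ioi] with t (ht : 0 < t)
  have hty : 0 ≤ fun i => t * y i := fun i => mul_nonneg ht.le (hy i)
  have hexp : (2 * (|B| + 1))⁻¹ * ‖fun i => t * y i‖ ≤ t / 2 := by
    have hnorm : ‖fun i => t * y i‖ = t * ‖y‖ := by
      rw [show (fun i => t * y i) = t • y from rfl, norm_smul, norm_of_nonneg ht.le]
    rw [hnorm, inv_mul_le_iff₀ (by positivity)]
    nlinarith [le_abs_self B]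
  calc ‖t ^ k * exp (-t) * f (fun i => t * y i)‖
      = t ^ k * exp (-t) * |f (fun i => t * y i)| := by
        rw [norm_mul, norm_mul, norm_of_nonneg (by positivity), norm_of_nonneg (by positivity),
          norm_eq_abs]
    _ ≤ t ^ k * exp (-t) * (C * exp (t / 2)) := by
        gcongr
        exact (hCf _ hty).trans (by gcongr)
    _ = C * (t ^ k * exp (-(1 / 2) * t)) := by
        rw [show -(1 / 2) * t = -t + t / 2 by ring, exp_add]; ring

noncomputable def cesDensity (n : ℕ) (r : ℝ) (f : (Fin n → ℝ) → ℝ) (x : Fin n → ℝ) : ℝ :=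
  (-r) ^ (n - 1) * (∏ i, x i) ^ (-r - 1) *
    ∫ t in Ioi (0:ℝ), t ^ (n - 1) * exp (-t) * f (fun i => t * x i ^ (-r))

section Density

variable {n : ℕ} {r : ℝ} {f : (Fin n → ℝ) → ℝ}

lemma measurable_cesDensity (hf : Measurable f) : Measurable (cesDensity n r f) := by
  have hjoint : Measurable fun q : (Fin n → ℝ) × ℝ =>
      q.2 ^ (n - 1) * exp (-q.2) * f (fun i => q.2 * q.1 i ^ (-r)) := by fun_prop
  have hint : StronglyMeasurable fun x : Fin n → ℝ =>
      ∫ t in Ioi (0:ℝ), t ^ (n - 1) * exp (-t) * f (fun i => t * x i ^ (-r)) :=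
    hjoint.stronglyMeasurable.integral_prod_right'
  unfold cesDensity
  fun_prop

lemma exists_abs_cesDensity_le (hr : r ≤ 0)
    (hf : ∀ A > (0:ℝ), ∃ C > (0:ℝ), ∀ y : Fin n → ℝ, 0 ≤ y → |f y| ≤ C * exp (A * ‖y‖))
    (R : ℝ) : ∃ K, 0 ≤ K ∧ ∀ x, 0 ≤ x → (∀ i, x i ≤ R) →
      |cesDensity n r f x| ≤ K * ∏ i, x i ^ (-r - 1) := by
  obtain ⟨M, hM0, hM⟩ := exists_abs_integral_pow_mul_exp_neg_le hf (n - 1) (|R| ^ (-r))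
  refine ⟨(-r) ^ (n - 1) * M, by have := neg_nonneg.2 hr; positivity, fun x hx hxR => ?_⟩
  have hy : ‖fun i => x i ^ (-r)‖ ≤ |R| ^ (-r) :=
    (pi_norm_le_iff_of_nonneg (by positivity)).2 fun i => by
      rw [norm_of_nonneg (rpow_nonneg (hx i) _)]
      exact rpow_le_rpow (hx i) ((hxR i).trans (le_abs_self R)) (neg_nonneg.2 hr)
  have hprod : 0 ≤ ∏ i, x i ^ (-r - 1) := Finset.prod_nonneg fun i _ => rpow_nonneg (hx i) _
  rw [cesDensity, ← finsetProd_rpow _ _ (fun i _ => hx i), abs_mul, abs_mul,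
    abs_of_nonneg (pow_nonneg (neg_nonneg.2 hr) _), abs_of_nonneg hprod]
  calc (-r) ^ (n - 1) * (∏ i, x i ^ (-r - 1)) *
        |∫ t in Ioi 0, t ^ (n - 1) * exp (-t) * f (fun i => t * x i ^ (-r))|
      ≤ (-r) ^ (n - 1) * (∏ i, x i ^ (-r - 1)) * M :=
        mul_le_mul_of_nonneg_left (hM _ (fun i => rpow_nonneg (hx i) _) hy)
          (mul_nonneg (pow_nonneg (neg_nonneg.2 hr) _) hprod)
    _ = (-r) ^ (n - 1) * M * ∏ i, x i ^ (-r - 1) := by ring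

end Density

/-- Boundary behaviour and positive homogeneity of the profit function
`Π(p,p₀) = ∫ (p₀ - h(p∘x))₊ φ(x) dx` built from the CES unit cost with `r ∈ [-1,0)`:
`Π(p,+0) = 0`, `∂Π/∂p₀(p,+0) = 0` and `Π(p,p₀) = p₀ Π(p/p₀,1)`. -/
theorem ces_profit_boundary_and_homogeneity
    (n : ℕ) (hn : 0 < n) (r : ℝ) (hr : r ∈ Set.Ico (-1:ℝ) 0)
    (f : (Fin n → ℝ) → ℝ) (hf_cont : Continuous f)
    (hf_growth : ∀ A > (0:ℝ), ∃ C > (0:ℝ), ∀ x : Fin n → ℝ, (∀ i, 0 ≤ x i) →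
      |f x| ≤ C * Real.exp (A * ‖x‖))
    (φ : (Fin n → ℝ) → ℝ)
    (hφ : φ = fun x => (-r) ^ (n - 1) * (∏ i, x i) ^ (-r - 1) *
      ∫ t in Ioi (0:ℝ), t ^ (n - 1) * Real.exp (-t) * f (fun i => t * (x i) ^ (-r)))
    (Pi : (Fin n → ℝ) → ℝ → ℝ)
    (hPi : Pi = fun p p₀ => ∫ x in {x : Fin n → ℝ | ∀ i, 0 ≤ x i},
      max (p₀ - (∑ i, (p i) ^ (-r) * (x i) ^ (-r)) ^ (-1 / r)) 0 * φ x) :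
    (∀ p : Fin n → ℝ, (∀ i, 0 < p i) →
        Tendsto (fun p₀ => Pi p p₀) (nhdsWithin 0 (Ioi 0)) (nhds 0)) ∧
    (∀ p : Fin n → ℝ, (∀ i, 0 < p i) →
        Tendsto (fun p₀ => deriv (Pi p) p₀) (nhdsWithin 0 (Ioi 0)) (nhds 0)) ∧
    (∀ p : Fin n → ℝ, ∀ p₀ : ℝ, (∀ i, 0 < p i) → 0 < p₀ →
        Pi p p₀ = p₀ * Pi (fun i => p i / p₀) 1) := by
  have hPi' : Pi = profit r (cesDensity n r f) := by rw [hPi, hφ]; rfl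
  subst hPi'
  have : Nonempty (Fin n) := Fin.pos_iff_nonempty.1 hn
  have hφm := (measurable_cesDensity (r := r) hf_cont.measurable).aestronglyMeasurable
    (μ := volume.restrict (Ici 0))
  have hdom := exists_abs_cesDensity_le hr.2.le hf_growth
  exact ⟨fun p hp => tendsto_profit_nhdsGT_zero hr.2 hp hφm hdom,
    fun p hp => tendsto_deriv_profit_nhdsGT_zero hr.2 hp hφm hdom,
    fun p p₀ hp hp₀ => profit_eq_mul_profit_div hr.2.ne (fun i => (hp i).le) hp₀⟩
end

section
/- For any three pairwise distinct index triples with strictly positive data p̂₁(t), p̂₂(t) for t ∈ {t₁,t₂,t₃} in general position (no two of the points (log p̂₁(t), log p̂₂(t)) equal and the three points not collinear with slope pattern forcing identically zero determinant), there exists at most one ρ ∈ [−1,0) ∪ (0,∞) such that det [[1,1,1],[p̂₁(t₁)^{−ρ}, p̂₁(t₂)^{−ρ}, p̂₁(t₃)^{−ρ}],[p̂₂(t₁)^{−ρ}, p̂₂(t₂)^{−ρ}, p̂₂(t₃)^{−ρ}]] = 0. -/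
/-!
Write `u = log p̂₁`, `v = log p̂₂`. The determinant vanishes for `ρ` exactly when the three points
`(exp (-ρ u), exp (-ρ v))` lie on a line `α + β X + γ Y = 0`. If one of `α, β, γ` were zero, the
points `(u, v)` would lie on a vertical, horizontal or diagonal line, so all three are nonzero and
the points `(u, v)` lie on the graph of `g_ρ x = -log (A + B exp (-ρ x)) / ρ` with `A, B ≠ 0`.
For two exponents `ρ ≠ ρ'`, the function `g_ρ - g_ρ'` would have three zeros, hence by Rolle a
derivative with two zeros; but that derivative vanishes exactly where
`B A' exp (-ρ x) = B' A exp (-ρ' x)`, which happens at most once.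
-/

open Matrix Real Set Function

theorem exists_affine_relation_of_det_eq_zero {K : Type*} [Field K] {X Y : Fin 3 → K}
    (h : !![1, 1, 1; X 0, X 1, X 2; Y 0, Y 1, Y 2].det = 0) :
    ∃ α β γ : K, ¬(α = 0 ∧ β = 0 ∧ γ = 0) ∧ ∀ t, α + β * X t + γ * Y t = 0 := by
  obtain ⟨w, hw0, hw⟩ := exists_vecMul_eq_zero_iff.mpr h
  refine ⟨w 0, w 1, w 2, fun ⟨h0, h1, h2⟩ => hw0 (funext fun i => by fin_cases i <;> assumption),
    fun t => ?_⟩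
  have := congrFun hw t
  fin_cases t <;> simpa [vecMul, dotProduct, Fin.sum_univ_three, mul_comm] using this

theorem collinear_of_forall_mul_add_mul_eq {s : Set (ℝ × ℝ)} {a b c : ℝ} (hab : a ≠ 0 ∨ b ≠ 0)
    (h : ∀ x ∈ s, a * x.1 + b * x.2 = c) : Collinear ℝ s := by
  have hn : a ^ 2 + b ^ 2 ≠ 0 := by
    rcases hab with hab | hab <;> positivity
  rw [collinear_iff_exists_forall_eq_smul_vadd]
  refine ⟨(c / (a ^ 2 + b ^ 2)) • (a, b), (-b, a), fun x hx =>
    ⟨(a * x.2 - b * x.1) / (a ^ 2 + b ^ 2), ?_⟩⟩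
  have := h x hx
  ext <;> simp only [Prod.smul_mk, smul_eq_mul, mul_neg, vadd_eq_add, Prod.mk_add_mk] <;>
    field_simp
  · linear_combination a * this
  · linear_combination b * this

theorem exp_neg_mul_injective {ρ : ℝ} (hρ : ρ ≠ 0) : Injective fun x => exp (-ρ * x) :=
  fun _ _ h => mul_left_cancel₀ (neg_ne_zero.mpr hρ) (exp_injective h)

theorem ne_zero_of_not_collinear_of_exp_relation {ι : Type*} {u v : ι → ℝ} {ρ α β γ : ℝ}
    (hρ : ρ ≠ 0) (hnocol : ¬Collinear ℝ (range fun t => (u t, v t)))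
    (hαβγ : ¬(α = 0 ∧ β = 0 ∧ γ = 0))
    (h : ∀ t, α + β * exp (-ρ * u t) + γ * exp (-ρ * v t) = 0) :
    α ≠ 0 ∧ β ≠ 0 ∧ γ ≠ 0 := by
  obtain ⟨t₀⟩ : Nonempty ι := by
    by_contra hι
    have := not_nonempty_iff.mp hι
    exact hnocol (by rw [range_eq_empty]; exact collinear_empty ℝ (ℝ × ℝ))
  have not_on_line : ∀ a b : ℝ, a ≠ 0 ∨ b ≠ 0 →
      ¬∀ t, a * u t + b * v t = a * u t₀ + b * v t₀ := fun a b hab hline =>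
    hnocol (collinear_of_forall_mul_add_mul_eq hab (by rintro _ ⟨t, rfl⟩; exact hline t))
  have hE := exp_neg_mul_injective hρ
  have hγ : γ ≠ 0 := by
    rintro rfl
    have hβ : β ≠ 0 := by
      rintro rfl
      exact hαβγ ⟨by simpa using h t₀, rfl, rfl⟩
    refine not_on_line 1 0 (by simp) fun t => ?_
    have : u t = u t₀ := hE (mul_left_cancel₀ hβ (by linear_combination h t - h t₀))
    simp [this]
  have hβ : β ≠ 0 := by
    rintro rfl
    refine not_on_line 0 1 (by simp) fun t => ?_
    have : v t = v t₀ := hE (mul_left_cancel₀ hγ (by linear_combination h t - h t₀))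
    simp [this]
  refine ⟨?_, hβ, hγ⟩
  rintro rfl
  refine not_on_line 1 (-1) (by simp) fun t => ?_
  have : u t + v t₀ = u t₀ + v t := hE <| mul_left_cancel₀ hβ <| by
    simp only [mul_add, exp_add]
    linear_combination exp (-ρ * v t₀) * h t - exp (-ρ * v t) * h t₀
  linarith

theorem exists_exp_relation_of_det_eq_zero {u v : Fin 3 → ℝ} {ρ : ℝ} (hρ : ρ ≠ 0)
    (hnocol : ¬Collinear ℝ (range fun t => (u t, v t)))
    (hdet : !![1, 1, 1;
        exp (-ρ * u 0), exp (-ρ * u 1), exp (-ρ * u 2);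
        exp (-ρ * v 0), exp (-ρ * v 1), exp (-ρ * v 2)].det = 0) :
    ∃ A B : ℝ, A ≠ 0 ∧ B ≠ 0 ∧ ∀ t, exp (-ρ * v t) = A + B * exp (-ρ * u t) := by
  obtain ⟨α, β, γ, hαβγ, h⟩ :=
    exists_affine_relation_of_det_eq_zero (X := fun t => exp (-ρ * u t))
      (Y := fun t => exp (-ρ * v t)) hdet
  obtain ⟨hα, hβ, hγ⟩ := ne_zero_of_not_collinear_of_exp_relation hρ hnocol hαβγ h
  refine ⟨-α / γ, -β / γ, by simp [hα, hγ], by simp [hβ, hγ], fun t => ?_⟩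
  rw [div_mul_eq_mul_div, ← add_div, eq_div_iff hγ]
  linear_combination h t

theorem exists_two_hasDerivAt_eq_zero {f f' : ℝ → ℝ} {a b c : ℝ} (hab : a < b) (hbc : b < c)
    (hfab : f a = f b) (hfbc : f b = f c) (hf : ∀ x ∈ Icc a c, HasDerivAt f (f' x) x) :
    ∃ x ∈ Ioo a b, ∃ y ∈ Ioo b c, f' x = 0 ∧ f' y = 0 := by
  have hcont : ContinuousOn f (Icc a c) := fun x hx => (hf x hx).continuousAt.continuousWithinAt
  obtain ⟨x, hx, hfx⟩ := exists_hasDerivAt_eq_zero hab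
    (hcont.mono (Icc_subset_Icc_right hbc.le)) hfab
    fun x hx => hf x ⟨hx.1.le, hx.2.le.trans hbc.le⟩
  obtain ⟨y, hy, hfy⟩ := exists_hasDerivAt_eq_zero hbc
    (hcont.mono (Icc_subset_Icc_left hab.le)) hfbc
    fun y hy => hf y ⟨hab.le.trans hy.1.le, hy.2.le⟩
  exact ⟨x, hx, y, hy, hfx, hfy⟩

theorem monotone_or_antitone_mul_exp_neg_mul (B ρ : ℝ) :
    Monotone (fun x => B * exp (-ρ * x)) ∨ Antitone (fun x => B * exp (-ρ * x)) := by
  have hexp : Monotone (fun x => exp (-ρ * x)) ∨ Antitone (fun x => exp (-ρ * x)) := by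
    rcases le_total ρ 0 with hρ | hρ
    · exact Or.inl fun x y hxy => exp_le_exp.2 (by nlinarith)
    · exact Or.inr fun x y hxy => exp_le_exp.2 (by nlinarith)
  rcases le_total 0 B with hB | hB <;> rcases hexp with h | h
  · exact Or.inl (h.const_mul hB)
  · exact Or.inr (h.const_mul hB)
  · exact Or.inr (h.const_mul_of_nonpos hB)
  · exact Or.inl (h.const_mul_of_nonpos hB)

theorem add_mul_exp_neg_mul_pos_of_mem_Icc {A B ρ a b x : ℝ} (hx : x ∈ Icc a b)
    (ha : 0 < A + B * exp (-ρ * a)) (hb : 0 < A + B * exp (-ρ * b)) :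
    0 < A + B * exp (-ρ * x) := by
  rcases monotone_or_antitone_mul_exp_neg_mul B ρ with h | h
  · exact ha.trans_le (add_le_add_right (h hx.1) A)
  · exact hb.trans_le (add_le_add_right (h hx.2) A)

theorem eq_of_mul_exp_eq_mul_exp {a b ρ ρ' x y : ℝ} (ha : a ≠ 0) (hxy : x ≠ y)
    (hx : a * exp (-ρ * x) = b * exp (-ρ' * x)) (hy : a * exp (-ρ * y) = b * exp (-ρ' * y)) :
    ρ = ρ' := by
  have solve : ∀ z, a * exp (-ρ * z) = b * exp (-ρ' * z) → a * exp ((ρ' - ρ) * z) = b := by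
    intro z hz
    apply mul_right_cancel₀ (exp_ne_zero (-ρ' * z))
    rw [mul_assoc, ← exp_add, ← hz]
    ring_nf
  have := exp_injective (mul_left_cancel₀ ha ((solve x hx).trans (solve y hy).symm))
  by_contra hne
  exact hxy (mul_left_cancel₀ (sub_ne_zero.mpr (Ne.symm hne)) this)

/-- In log coordinates `(u, v)`, the line `Y = A + B X` through the points
`(exp (-ρ u), exp (-ρ v))` becomes the graph `v = cesLogCurve ρ A B u`. -/
noncomputable def cesLogCurve (ρ A B x : ℝ) : ℝ := -log (A + B * exp (-ρ * x)) / ρ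

theorem cesLogCurve_eq {ρ A B x y : ℝ} (hρ : ρ ≠ 0) (h : exp (-ρ * y) = A + B * exp (-ρ * x)) :
    cesLogCurve ρ A B x = y := by
  rw [cesLogCurve, ← h, log_exp]
  field_simp

theorem hasDerivAt_cesLogCurve {ρ A B x : ℝ} (hρ : ρ ≠ 0) (hx : A + B * exp (-ρ * x) ≠ 0) :
    HasDerivAt (cesLogCurve ρ A B) (B * exp (-ρ * x) / (A + B * exp (-ρ * x))) x := by
  have := (((((hasDerivAt_id x).const_mul (-ρ)).exp.const_mul B).const_add A).log hx).neg
  refine (this.div_const ρ).congr_deriv ?_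
  simp only [id]
  field_simp

theorem eq_of_cesLogCurve_eq_of_strictMono {ρ ρ' A B A' B' : ℝ} (hρ : ρ ≠ 0) (hρ' : ρ' ≠ 0)
    (hB : B ≠ 0) (hA' : A' ≠ 0) {x : Fin 3 → ℝ} (hx : StrictMono x)
    (hpos : ∀ i, 0 < A + B * exp (-ρ * x i)) (hpos' : ∀ i, 0 < A' + B' * exp (-ρ' * x i))
    (heq : ∀ i, cesLogCurve ρ A B (x i) = cesLogCurve ρ' A' B' (x i)) : ρ = ρ' := by
  have h01 : x 0 < x 1 := hx (by decide)
  have h12 : x 1 < x 2 := hx (by decide)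
  have hposI : ∀ z ∈ Icc (x 0) (x 2),
      0 < A + B * exp (-ρ * z) ∧ 0 < A' + B' * exp (-ρ' * z) := fun z hz =>
    ⟨add_mul_exp_neg_mul_pos_of_mem_Icc hz (hpos 0) (hpos 2),
      add_mul_exp_neg_mul_pos_of_mem_Icc hz (hpos' 0) (hpos' 2)⟩
  obtain ⟨c, hc, c', hc', hdc, hdc'⟩ := exists_two_hasDerivAt_eq_zero
    (f := fun z => cesLogCurve ρ A B z - cesLogCurve ρ' A' B' z) h01 h12
    (by simp only [heq, sub_self]) (by simp only [heq, sub_self]) fun z hz =>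
      (hasDerivAt_cesLogCurve hρ (hposI z hz).1.ne').sub
        (hasDerivAt_cesLogCurve hρ' (hposI z hz).2.ne')
  have critical : ∀ z ∈ Icc (x 0) (x 2),
      B * exp (-ρ * z) / (A + B * exp (-ρ * z)) -
        B' * exp (-ρ' * z) / (A' + B' * exp (-ρ' * z)) = 0 →
      B * A' * exp (-ρ * z) = B' * A * exp (-ρ' * z) := by
    intro z hz hdz
    rw [sub_eq_zero, div_eq_div_iff (hposI z hz).1.ne' (hposI z hz).2.ne'] at hdz
    linear_combination hdz
  exact eq_of_mul_exp_eq_mul_exp (mul_ne_zero hB hA') (hc.2.trans hc'.1).ne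
    (critical c ⟨hc.1.le, hc.2.le.trans h12.le⟩ hdc)
    (critical c' ⟨h01.le.trans hc'.1.le, hc'.2.le⟩ hdc')

theorem eq_of_exp_relations {u v : Fin 3 → ℝ} (huv : Injective fun t => (u t, v t))
    {ρ ρ' A B A' B' : ℝ} (hρ : ρ ≠ 0) (hρ' : ρ' ≠ 0) (hB : B ≠ 0) (hA' : A' ≠ 0)
    (hrel : ∀ t, exp (-ρ * v t) = A + B * exp (-ρ * u t))
    (hrel' : ∀ t, exp (-ρ' * v t) = A' + B' * exp (-ρ' * u t)) : ρ = ρ' := by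
  have hu : Injective u := fun t t' h => huv <| Prod.ext h <|
    exp_neg_mul_injective hρ (by simp only [hrel, h])
  have hsorted := (Tuple.monotone_sort u).strictMono_of_injective
    (hu.comp (Tuple.sort u).injective)
  exact eq_of_cesLogCurve_eq_of_strictMono hρ hρ' hB hA' hsorted
    (fun _ => hrel _ ▸ exp_pos _) (fun _ => hrel' _ ▸ exp_pos _)
    fun _ => (cesLogCurve_eq hρ (hrel _)).trans (cesLogCurve_eq hρ' (hrel' _)).symm

theorem rpow_neg_eq_exp {q : ℝ} (hq : 0 < q) (ρ : ℝ) : q ^ (-ρ) = exp (-ρ * log q) := by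
  rw [rpow_def_of_pos hq, mul_comm]

/-- For three price pairs in general position (the points `(log p̂₁(t), log p̂₂(t))` pairwise
distinct and not collinear), there is at most one `ρ ∈ [-1,0) ∪ (0,∞)` for which the three
CES level curves have a common point, i.e. for which the determinant vanishes. -/
theorem at_most_one_rho_triple_intersection
    (q₁ q₂ : Fin 3 → ℝ) (hq₁ : ∀ t, 0 < q₁ t) (hq₂ : ∀ t, 0 < q₂ t)
    (hdist : ∀ t t' : Fin 3, t ≠ t' →
      (Real.log (q₁ t), Real.log (q₂ t)) ≠ (Real.log (q₁ t'), Real.log (q₂ t')))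
    (hnocol : ¬ Collinear ℝ
      {x : ℝ × ℝ | ∃ t : Fin 3, x = (Real.log (q₁ t), Real.log (q₂ t))}) :
    ∀ ρ ρ' : ℝ, ρ ∈ Set.Ico (-1:ℝ) 0 ∪ Set.Ioi 0 → ρ' ∈ Set.Ico (-1:ℝ) 0 ∪ Set.Ioi 0 →
      Matrix.det !![1, 1, 1;
        q₁ 0 ^ (-ρ), q₁ 1 ^ (-ρ), q₁ 2 ^ (-ρ);
        q₂ 0 ^ (-ρ), q₂ 1 ^ (-ρ), q₂ 2 ^ (-ρ)] = 0 →
      Matrix.det !![1, 1, 1;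
        q₁ 0 ^ (-ρ'), q₁ 1 ^ (-ρ'), q₁ 2 ^ (-ρ');
        q₂ 0 ^ (-ρ'), q₂ 1 ^ (-ρ'), q₂ 2 ^ (-ρ')] = 0 →
      ρ = ρ' := by
  intro ρ ρ' hρ hρ' hdet hdet'
  have nonzero : ∀ σ ∈ Ico (-1 : ℝ) 0 ∪ Ioi 0, σ ≠ 0 := by
    rintro σ (h | h)
    exacts [h.2.ne, ne_of_gt h]
  simp only [rpow_neg_eq_exp (hq₁ _), rpow_neg_eq_exp (hq₂ _)] at hdet hdet'
  have hnocol' : ¬Collinear ℝ (range fun t => (log (q₁ t), log (q₂ t))) := by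
    simpa only [range, eq_comm] using hnocol
  obtain ⟨A, B, -, hB, hrel⟩ := exists_exp_relation_of_det_eq_zero (nonzero ρ hρ) hnocol' hdet
  obtain ⟨A', B', hA', -, hrel'⟩ :=
    exists_exp_relation_of_det_eq_zero (nonzero ρ' hρ') hnocol' hdet'
  have hinj : Injective fun t => (log (q₁ t), log (q₂ t)) := fun t t' =>
    not_imp_not.mp (hdist t t')
  exact eq_of_exp_relations hinj (nonzero ρ hρ) (nonzero ρ' hρ') hB hA' hrel hrel'
end

section
/- Let T lines p̃₁(t)z₁ + p̃₂(t)z₂ = 1 (t = 1,…,T) in ℝ²₊ with all p̃ᵢ(t) > 0 partition int ℝ²₊ into domains, and let λ ∈ S_T order the outputs y(λ(T)) < ⋯ < y(λ(1)). If there exists a ray R_α = {z₂ = z₁ tan α}, α ∈ (0,π/2), meeting no triple intersection point, along which the point traverses the lines in the order λ (i.e., π(α) = λ), then there exists a non-negative absolutely continuous measure μ̃ on ℝ²₊ with ∫ θ(1 − p̃₁(t)z₁ − p̃₂(t)z₂) μ̃(dz) = y(t) for all t = 1,…,T. -/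
open MeasureTheory Set Real

/-- Sufficient condition for solvability of the linearized moment problem: if some ray
`R_α` (meeting the `T` lines at pairwise distinct points) crosses the lines in the order
`λ` in which the outputs decrease, then a non-negative absolutely continuous measure
solving the moment problem exists. -/
theorem snake_gives_moment_solution
    (T : ℕ) (q₁ q₂ : Fin T → ℝ) (hq₁ : ∀ t, 0 < q₁ t) (hq₂ : ∀ t, 0 < q₂ t)
    (y : Fin T → ℝ) (hy : ∀ t, 0 ≤ y t)
    (lam : Equiv.Perm (Fin T))
    (hlam : ∀ k k' : Fin T, k < k' → y (lam k') < y (lam k))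
    (α : ℝ) (hα : α ∈ Set.Ioo 0 (Real.pi / 2))
    (horder : ∀ k k' : Fin T, k < k' →
      1 / (q₁ (lam k') + q₂ (lam k') * Real.tan α)
        < 1 / (q₁ (lam k) + q₂ (lam k) * Real.tan α)) :
    ∃ μ : Measure (ℝ × ℝ),
      μ ≪ volume ∧
      μ {z | ¬ (0 ≤ z.1 ∧ 0 ≤ z.2)} = 0 ∧
      ∀ t, μ {z : ℝ × ℝ | 0 ≤ z.1 ∧ 0 ≤ z.2 ∧ q₁ t * z.1 + q₂ t * z.2 ≤ 1}
        = ENNReal.ofReal (y t) := by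
  obtain ⟨hα0, hα2⟩ := hα
  have htan : 0 < Real.tan α := Real.tan_pos_of_pos_of_lt_pi_div_two hα0 hα2
  -- the crossing abscissa of line t along the ray
  set c : Fin T → ℝ := fun t => 1 / (q₁ t + q₂ t * Real.tan α) with hc_def
  have hden : ∀ t, 0 < q₁ t + q₂ t * Real.tan α := fun t =>
    add_pos (hq₁ t) (mul_pos (hq₂ t) htan)
  have hc_pos : ∀ t, 0 < c t := fun t => by
    simpa [hc_def] using one_div_pos.mpr (hden t)
  -- extended sequence of abscissae
  set nx : ℕ → ℝ := fun n => if h : n < T then c (lam ⟨n, h⟩) else 0 with hnx_def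
  have hnx_nonneg : ∀ n, 0 ≤ nx n := fun n => by
    by_cases h : n < T
    · simp [hnx_def, h, (hc_pos _).le]
    · simp [hnx_def, h]
  have hnx_lt : ∀ a b : ℕ, a < T → a < b → nx b < nx a := by
    intro a b ha hab
    by_cases hb : b < T
    · simpa [hnx_def, ha, hb, hc_def, one_div] using horder ⟨a, ha⟩ ⟨b, hb⟩ (by simpa using hab)
    · simpa [hnx_def, ha, hb] using hc_pos (lam ⟨a, ha⟩)
  have hnx_le : ∀ a b : ℕ, a < T → a ≤ b → nx b ≤ nx a := by
    intro a b ha hab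
    rcases eq_or_lt_of_le hab with h | h
    · subst h; exact le_rfl
    · exact (hnx_lt a b ha h).le
  -- midpoints between consecutive crossings
  set x : Fin T → ℝ := fun k => (nx (k + 1) + nx k) / 2 with hx_def
  have hx_lt : ∀ k : Fin T, nx (k + 1) < x k ∧ x k < nx k := by
    intro k
    have h := hnx_lt k (k + 1) k.isLt (Nat.lt_succ_self _)
    constructor <;> · simp only [hx_def]; linarith
  have hx_pos : ∀ k : Fin T, 0 < x k := by
    intro k
    exact lt_of_le_of_lt (hnx_nonneg (k + 1)) (hx_lt k).1
  -- location of supports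
  set p : Fin T → ℝ × ℝ := fun k => (x k, x k * Real.tan α) with hp_def
  have hval : ∀ (t : Fin T) (k : Fin T),
      q₁ t * (p k).1 + q₂ t * (p k).2 = x k / c t := by
    intro t k
    have h := (hden t).ne'
    simp only [hp_def, hc_def]
    field_simp
  have hct_eq : ∀ t : Fin T, c t = nx ((lam.symm t : Fin T) : ℕ) := by
    intro t
    have h : ((lam.symm t : Fin T) : ℕ) < T := (lam.symm t).isLt
    simp [hnx_def, h]
  have hlt : ∀ (k t : Fin T), ((lam.symm t : Fin T) : ℕ) ≤ (k : ℕ) → x k < c t := by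
    intro k t hjk
    have : nx (k : ℕ) ≤ nx ((lam.symm t : Fin T) : ℕ) :=
      hnx_le _ _ (lam.symm t).isLt hjk
    rw [hct_eq t]
    exact lt_of_lt_of_le (hx_lt k).2 this
  have hgt : ∀ (k t : Fin T), (k : ℕ) < ((lam.symm t : Fin T) : ℕ) → c t < x k := by
    intro k t hjk
    have h1 : nx ((lam.symm t : Fin T) : ℕ) ≤ nx ((k : ℕ) + 1) :=
      hnx_le _ _ (lt_of_le_of_lt (Nat.succ_le_of_lt hjk) (lam.symm t).isLt)
        (Nat.succ_le_of_lt hjk)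
    rw [hct_eq t]
    exact lt_of_le_of_lt h1 (hx_lt k).1
  -- open neighbourhoods with constant sign pattern
  set U : Fin T → Set (ℝ × ℝ) := fun k =>
    ({z : ℝ × ℝ | 0 < z.1} ∩ {z : ℝ × ℝ | 0 < z.2}) ∩
      ⋂ t : Fin T, (if ((lam.symm t : Fin T) : ℕ) ≤ (k : ℕ)
        then {z : ℝ × ℝ | q₁ t * z.1 + q₂ t * z.2 < 1}
        else {z : ℝ × ℝ | 1 < q₁ t * z.1 + q₂ t * z.2}) with hU_def
  have hcont : ∀ t : Fin T, Continuous (fun z : ℝ × ℝ => q₁ t * z.1 + q₂ t * z.2) :=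
    fun t => ((continuous_const.mul continuous_fst).add (continuous_const.mul continuous_snd))
  have hUopen : ∀ k, IsOpen (U k) := by
    intro k
    refine IsOpen.inter (IsOpen.inter ?_ ?_) (isOpen_iInter_of_finite fun t => ?_)
    · exact isOpen_lt continuous_const continuous_fst
    · exact isOpen_lt continuous_const continuous_snd
    · split
      · exact isOpen_lt (hcont t) continuous_const
      · exact isOpen_lt continuous_const (hcont t)
  have hUmem : ∀ k, p k ∈ U k := by
    intro k
    refine ⟨⟨hx_pos k, mul_pos (hx_pos k) htan⟩, ?_⟩
    rw [Set.mem_iInter]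
    intro t
    split
    · next h =>
      have := hlt k t h
      simp only [Set.mem_setOf_eq, hval t k]
      exact (div_lt_one (hc_pos t)).mpr this
    · next h =>
      have := hgt k t (Nat.lt_of_not_le h)
      simp only [Set.mem_setOf_eq, hval t k]
      exact (one_lt_div (hc_pos t)).mpr this
  have hr' : ∀ k, ∃ r > 0, Metric.ball (p k) r ⊆ U k := fun k =>
    Metric.isOpen_iff.mp (hUopen k) (p k) (hUmem k)
  choose r hr hball using hr'
  set B : Fin T → Set (ℝ × ℝ) := fun k => Metric.ball (p k) (r k) with hB_def
  have hv0 : ∀ k, volume (B k) ≠ 0 := fun k =>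
    (Metric.measure_ball_pos volume (p k) (hr k)).ne'
  have hvtop : ∀ k, volume (B k) ≠ ⊤ := fun k => measure_ball_lt_top.ne
  -- extended outputs and masses
  set ny : ℕ → ℝ := fun n => if h : n < T then y (lam ⟨n, h⟩) else 0 with hny_def
  set m : Fin T → ℝ := fun k => ny k - ny (k + 1) with hm_def
  have hm_nonneg : ∀ k, 0 ≤ m k := by
    intro k
    simp only [hm_def, hny_def, k.isLt, dif_pos]
    by_cases h : (k : ℕ) + 1 < T
    · rw [dif_pos h]
      have := hlam ⟨k, k.isLt⟩ ⟨k + 1, h⟩ (by simp [Fin.lt_def])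
      linarith
    · rw [dif_neg h]
      simpa using hy (lam ⟨k, k.isLt⟩)
  -- the measure
  set μ : Measure (ℝ × ℝ) :=
    ∑ k : Fin T, (ENNReal.ofReal (m k) / volume (B k)) • (volume.restrict (B k)) with hμ_def
  have hμapp : ∀ s : Set (ℝ × ℝ),
      μ s = ∑ k : Fin T, (ENNReal.ofReal (m k) / volume (B k)) * volume (s ∩ B k) := by
    intro s
    rw [hμ_def, Measure.finset_sum_apply]
    refine Finset.sum_congr rfl fun k _ => ?_
    rw [Measure.smul_apply, smul_eq_mul, Measure.restrict_apply' Metric.isOpen_ball.measurableSet]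
  refine ⟨μ, ?_, ?_, ?_⟩
  · -- absolute continuity
    intro s hs
    rw [hμapp]
    refine Finset.sum_eq_zero fun k _ => ?_
    rw [measure_mono_null Set.inter_subset_left hs, mul_zero]
  · -- supported in the quadrant
    rw [hμapp]
    refine Finset.sum_eq_zero fun k _ => ?_
    have : {z : ℝ × ℝ | ¬ (0 ≤ z.1 ∧ 0 ≤ z.2)} ∩ B k = ∅ := by
      rw [Set.eq_empty_iff_forall_notMem]
      rintro z ⟨hz, hzB⟩
      obtain ⟨⟨h1, h2⟩, -⟩ := hball k hzB
      exact hz ⟨h1.le, h2.le⟩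
    rw [this, measure_empty, mul_zero]
  · -- the moment conditions
    intro t
    set j : Fin T := lam.symm t with hj_def
    have hjt : lam j = t := lam.apply_symm_apply t
    set A : Set (ℝ × ℝ) := {z : ℝ × ℝ | 0 ≤ z.1 ∧ 0 ≤ z.2 ∧ q₁ t * z.1 + q₂ t * z.2 ≤ 1}
      with hA_def
    have hterm : ∀ k : Fin T,
        (ENNReal.ofReal (m k) / volume (B k)) * volume (A ∩ B k)
          = if (j : ℕ) ≤ (k : ℕ) then ENNReal.ofReal (m k) else 0 := by
      intro k
      by_cases h : (j : ℕ) ≤ (k : ℕ)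
      · rw [if_pos h]
        have hsub : B k ⊆ A := by
          intro z hz
          obtain ⟨⟨h1, h2⟩, h3⟩ := hball k hz
          rw [Set.mem_iInter] at h3
          have h4 := h3 t
          rw [if_pos h] at h4
          exact ⟨h1.le, h2.le, h4.le⟩
        rw [Set.inter_eq_right.mpr hsub, ENNReal.div_mul_cancel (hv0 k) (hvtop k)]
      · rw [if_neg h]
        have : A ∩ B k = ∅ := by
          rw [Set.eq_empty_iff_forall_notMem]
          rintro z ⟨hzA, hzB⟩
          obtain ⟨-, h3⟩ := hball k hzB
          rw [Set.mem_iInter] at h3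
          have h4 := h3 t
          rw [if_neg h] at h4
          exact absurd hzA.2.2 (not_le.mpr h4)
        rw [this, measure_empty, mul_zero]
    rw [hμapp]
    simp only [hterm]
    -- now the telescoping sum
    have hite : ∀ k : Fin T,
        (if (j : ℕ) ≤ (k : ℕ) then ENNReal.ofReal (m k) else 0)
          = ENNReal.ofReal (if (j : ℕ) ≤ (k : ℕ) then m k else 0) := by
      intro k; split <;> simp
    simp only [hite]
    rw [← ENNReal.ofReal_sum_of_nonneg (fun k _ => by split; exacts [hm_nonneg k, le_rfl])]
    congr 1
    have hyt : y t = ny (j : ℕ) := by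
      simp [hny_def, j.isLt, ← hjt]
    rw [hyt]
    have hfin : (∑ k : Fin T, if (j : ℕ) ≤ (k : ℕ) then m k else 0)
        = ∑ n ∈ Finset.range T, (if (j : ℕ) ≤ n then ny n - ny (n + 1) else 0) := by
      rw [Fin.sum_univ_eq_sum_range (fun n => if (j : ℕ) ≤ n then ny n - ny (n + 1) else 0)]
    rw [hfin, ← Finset.sum_filter]
    have hIco : (Finset.range T).filter (fun n => (j : ℕ) ≤ n) = Finset.Ico (j : ℕ) T := by
      ext n
      simp [Finset.mem_filter, Finset.mem_range, Finset.mem_Ico, and_comm]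
    rw [hIco, Finset.sum_Ico_eq_sub _ j.isLt.le, Finset.sum_range_sub' ny,
      Finset.sum_range_sub' ny]
    have hnyT : ny T = 0 := by simp [hny_def]
    rw [hnyT]
    ring
end

section
/- Let X = {x¹,…,x^m} ⊂ ℝⁿ₊, Y = {y¹,…,y^m} ⊂ ℝⁿ₊ be finite multisets and K ⊆ ℝⁿ₊ a cone with dual cone K* = {p ∈ ℝⁿ : p·s ≥ 0 for all s ∈ K}. A bijection γ: X → Y is K-stable (i.e., for all xⁱ, xʲ ∈ X and s ∈ K, s·xⁱ < s·xʲ implies s·γ(xⁱ) ≤ s·γ(xʲ)) if it satisfies: (i) xⁱ ≠ xʲ and xʲ − xⁱ ∈ K* imply γ(xʲ) − γ(xⁱ) ∈ K*; and (ii) if xʲ − xⁱ ∉ K* and xⁱ − xʲ ∉ K*, then there exist λ ≥ 0, μ ≥ 0 with λ + μ > 0 and λ(xʲ − xⁱ) = μ(γ(xʲ) − γ(xⁱ)). (Sufficiency direction of the Karzanov–Shananin criterion.) -/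
open Finset

lemma ks_dot_sub (n : ℕ) (K : Set (Fin n → ℝ)) (s : Fin n → ℝ) (hs : s ∈ K)
    (a b : Fin n → ℝ) (h : ∀ s ∈ K, 0 ≤ ∑ i, (a - b) i * s i) :
    (∑ k, s k * b k) ≤ (∑ k, s k * a k) := by
  have := h s hs
  simp only [Pi.sub_apply, sub_mul, Finset.sum_sub_distrib] at this
  have h1 : ∑ i, a i * s i = ∑ k, s k * a k := by
    exact Finset.sum_congr rfl fun i _ => mul_comm _ _
  have h2 : ∑ i, b i * s i = ∑ k, s k * b k := by
    exact Finset.sum_congr rfl fun i _ => mul_comm _ _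
  linarith [this]

/-- Sufficiency direction of the Karzanov–Shananin criterion: a bijection `γ` between two
multisets of technologies satisfying conditions (i) and (ii) with respect to the dual cone
`K*` is `K`-stable. -/
theorem karzanov_shananin_sufficiency
    (n m : ℕ) (K : Set (Fin n → ℝ))
    (hK : K ⊆ {s | ∀ i, 0 ≤ s i})
    (Kd : Set (Fin n → ℝ))
    (hKd : Kd = {p | ∀ s ∈ K, 0 ≤ ∑ i, p i * s i})
    (x y : Fin m → (Fin n → ℝ))
    (hx : ∀ i j, 0 ≤ x i j) (hy : ∀ i j, 0 ≤ y i j)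
    (γ : Equiv.Perm (Fin m))
    (hi : ∀ i j : Fin m, x i ≠ x j → x j - x i ∈ Kd → y (γ j) - y (γ i) ∈ Kd)
    (hii : ∀ i j : Fin m, x j - x i ∉ Kd → x i - x j ∉ Kd →
      ∃ lam mu : ℝ, 0 ≤ lam ∧ 0 ≤ mu ∧ 0 < lam + mu ∧
        lam • (x j - x i) = mu • (y (γ j) - y (γ i))) :
    ∀ i j : Fin m, ∀ s ∈ K,
      (∑ k, s k * x i k) < (∑ k, s k * x j k) →
      (∑ k, s k * y (γ i) k) ≤ (∑ k, s k * y (γ j) k) := by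
  subst hKd
  intro i j s hs hlt
  by_cases h1 : x j - x i ∈ {p | ∀ s ∈ K, 0 ≤ ∑ i, p i * s i}
  · have hne : x i ≠ x j := by
      intro h; rw [h] at hlt; exact lt_irrefl _ hlt
    have := hi i j hne h1
    exact ks_dot_sub n K s hs _ _ this
  · have h2 : x i - x j ∉ {p | ∀ s ∈ K, 0 ≤ ∑ i, p i * s i} := by
      intro h
      have := ks_dot_sub n K s hs (x i) (x j) h
      linarith
    obtain ⟨lam, mu, hlam, hmu, hpos, heq⟩ := hii i j h1 h2
    -- dot both sides with s
    have hdot : lam * ((∑ k, s k * x j k) - (∑ k, s k * x i k)) =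
        mu * ((∑ k, s k * y (γ j) k) - (∑ k, s k * y (γ i) k)) := by
      have := congrFun heq
      simp only [Pi.smul_apply, Pi.sub_apply, smul_eq_mul] at this
      have e1 : ∑ k, s k * (lam * (x j k - x i k)) =
          ∑ k, s k * (mu * (y (γ j) k - y (γ i) k)) :=
        Finset.sum_congr rfl fun k _ => by rw [this k]
      have e2 : ∀ (c : ℝ) (a b : Fin n → ℝ),
          ∑ k, s k * (c * (a k - b k)) = c * ((∑ k, s k * a k) - (∑ k, s k * b k)) := by
        intro c a b
        rw [mul_sub, Finset.mul_sum, Finset.mul_sum, ← Finset.sum_sub_distrib]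
        exact Finset.sum_congr rfl fun k _ => by ring
      rw [e2, e2] at e1
      exact e1
    rcases eq_or_lt_of_le hmu with hmu0 | hmu0
    · exfalso
      rw [← hmu0] at hdot hpos
      simp at hdot hpos
      rcases hdot with h | h
      · rw [h] at hpos; simp at hpos
      · linarith
    · nlinarith
end
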